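/- arXiv:2106.00657 — 10 statements merged into one kernel-verified Lean document; each statement's English description precedes it below -/
import Mathlib

section
/- The gadget graph constructed from any E3C instance is K_4-free: it contains no set of four pairwise adjacent vertices. -/
open scoped Classical

/-- Vertex set of the gadget graph: element vertices `u` (coded `.inl (.inl u)`) and
`u'` (coded `.inl (.inr u)`) for each `u : U`, and triangle vertices
`a_i, b_i, c_i` (coded `.inr (i, 0/1/2)`) for each `i : Fin m`. -/
abbrev GVert (U : Type*) (m : ℕ) := (U ⊕ U) ⊕ (Fin m × Fin 3)

section Gadget

variable {U : Type*} {m : ℕ}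

/-- The element vertex `u`. -/
def el (u : U) : GVert U m := Sum.inl (Sum.inl u)

/-- The element vertex `u'`. -/
def el' (u : U) : GVert U m := Sum.inl (Sum.inr u)

/-- The triangle vertex `a_i`. -/
def va (i : Fin m) : GVert U m := Sum.inr (i, 0)

/-- The triangle vertex `b_i`. -/
def vb (i : Fin m) : GVert U m := Sum.inr (i, 1)

/-- The triangle vertex `c_i`. -/
def vc (i : Fin m) : GVert U m := Sum.inr (i, 2)

/-- The twelve gadget edges `E_i` for the set `S i = (u, v, w)`, namely
`a_ib_i, a_ic_i, b_ic_i, a_iu, b_iu, a_iu', a_iv, c_iv, c_iv', b_iw, c_iw, b_iw'`. -/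
def Ei (S : Fin m → U × U × U) (i : Fin m) : Set (Sym2 (GVert U m)) :=
  {s(va i, vb i), s(va i, vc i), s(vb i, vc i),
   s(va i, el (S i).1), s(vb i, el (S i).1), s(va i, el' (S i).1),
   s(va i, el (S i).2.1), s(vc i, el (S i).2.1), s(vc i, el' (S i).2.1),
   s(vb i, el (S i).2.2), s(vc i, el (S i).2.2), s(vb i, el' (S i).2.2)}

/-- All the edges of the gadget graph: an element-edge `uu'` for every `u : U`,
together with the twelve gadget edges of `E_i` for every `i : Fin m`. -/
def gadgetEdges (S : Fin m → U × U × U) : Set (Sym2 (GVert U m)) :=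
  {e | ∃ u : U, e = s(el u, el' u)} ∪ {e | ∃ i : Fin m, e ∈ Ei S i}

/-- The gadget graph of the E3C instance `S`. -/
def gadgetGraph (S : Fin m → U × U × U) : SimpleGraph (GVert U m) :=
  SimpleGraph.fromEdgeSet (gadgetEdges S)

/-- `S` lists genuine 3-element subsets: the three listed elements of each `S i`
are pairwise distinct. -/
def E3CInstance (S : Fin m → U × U × U) : Prop :=
  ∀ i : Fin m, (S i).1 ≠ (S i).2.1 ∧ (S i).1 ≠ (S i).2.2 ∧ (S i).2.1 ≠ (S i).2.2

/-- `T` is a solution of the E3C instance `S`: a choice of `q` of the sets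
whose union is all of `U`. -/
def E3CSolution (q : ℕ) (S : Fin m → U × U × U) (T : Finset (Fin m)) : Prop :=
  T.card = q ∧ ∀ x : U, ∃ i ∈ T, x = (S i).1 ∨ x = (S i).2.1 ∨ x = (S i).2.2

end Gadget

/-!
Triangle vertices are adjacent only inside their own gadget, so a clique meets at most one
triangle `a_i b_i c_i`, and element vertices span the perfect matching `u u'`, so a clique contains
at most two of them. A `K_4` would therefore need an element vertex seeing all of `a_i, b_i, c_i`,
or an edge `u u'` whose ends both see two of them. Since `u, v, w` are distinct, no element vertex
sees all three, and a primed vertex `x'` sees at most one.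
-/

open Finset

namespace gadgetGraph

variable {U : Type*} {m : ℕ} {S : Fin m → U × U × U}

lemma adj_inl_inl {p q : U ⊕ U} : (gadgetGraph S).Adj (.inl p) (.inl q) ↔ q = p.swap := by
  simp only [gadgetGraph, gadgetEdges, Ei, el, el', va, vb, vc]
  rcases p with x | x <;> rcases q with y | y <;> simp [@eq_comm _ y]

lemma adj_inr_inr {i j : Fin m} {k l : Fin 3} :
    (gadgetGraph S).Adj (.inr (i, k)) (.inr (j, l)) ↔ i = j ∧ k ≠ l := by
  simp only [gadgetGraph, gadgetEdges, Ei, el, el', va, vb, vc]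
  fin_cases k <;> fin_cases l <;> simp [@eq_comm _ j]

lemma el'_adj_inr {x : U} {i : Fin m} {k : Fin 3} :
    (gadgetGraph S).Adj (el' x) (.inr (i, k)) ↔ x = ![(S i).1, (S i).2.2, (S i).2.1] k := by
  simp only [gadgetGraph, gadgetEdges, Ei, el, el', va, vb, vc]
  fin_cases k <;> simp [exists_or]

lemma el_adj_inr {x : U} {i : Fin m} {k : Fin 3} :
    (gadgetGraph S).Adj (el x) (.inr (i, k)) ↔
      x = ![(S i).1, (S i).1, (S i).2.1] k ∨ x = ![(S i).2.1, (S i).2.2, (S i).2.2] k := by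
  simp only [gadgetGraph, gadgetEdges, Ei, el, el', va, vb, vc]
  fin_cases k <;> simp [exists_or]

lemma not_forall_el_adj_inr (hS : E3CInstance S) (x : U) (i : Fin m) :
    ¬ ∀ k, (gadgetGraph S).Adj (el x) (.inr (i, k)) := by
  intro h
  have ha := el_adj_inr.1 (h 0)
  have hb := el_adj_inr.1 (h 1)
  have hc := el_adj_inr.1 (h 2)
  obtain ⟨huv, huw, hvw⟩ := hS i
  simp only [Fin.isValue, Matrix.cons_val] at ha hb hc
  grind

lemma eq_of_el'_adj_inr (hS : E3CInstance S) {x : U} {i : Fin m} {k l : Fin 3}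
    (hk : (gadgetGraph S).Adj (el' x) (.inr (i, k)))
    (hl : (gadgetGraph S).Adj (el' x) (.inr (i, l))) : k = l := by
  rw [el'_adj_inr] at hk hl
  obtain ⟨huv, huw, hvw⟩ := hS i
  fin_cases k <;> fin_cases l <;> simp_all [eq_comm]

variable {s : Finset (GVert U m)}

lemma card_toLeft_le_two (hs : (gadgetGraph S).IsClique s) : #s.toLeft ≤ 2 := by
  by_contra! h
  obtain ⟨p, hp, q, hq, r, hr, hpq, hpr, hqr⟩ := two_lt_card.1 h
  rw [mem_toLeft] at hp hq hr
  have hq' := adj_inl_inl.1 (hs hp hq (by simpa using hpq))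
  have hr' := adj_inl_inl.1 (hs hp hr (by simpa using hpr))
  exact hqr (hq'.trans hr'.symm)

lemma el'_mem_of_el_mem (hs : (gadgetGraph S).IsClique s) {x : U} (hx : el x ∈ s)
    (h : 1 < #s.toLeft) : el' x ∈ s := by
  obtain ⟨q, hq, hqx⟩ := exists_mem_ne h (.inl x)
  rw [mem_toLeft] at hq
  obtain rfl := adj_inl_inl.1 (hs hx hq (by simpa [el] using hqx.symm))
  exact hq

lemma toRight_subset_gadget (hs : (gadgetGraph S).IsClique s) {i : Fin m} {k : Fin 3}
    (hik : (i, k) ∈ s.toRight) : s.toRight ⊆ {i} ×ˢ univ := by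
  rintro ⟨j, l⟩ hjl
  rw [mem_toRight] at hik hjl
  suffices j = i by simp [this]
  by_cases h : (j, l) = (i, k)
  · simpa using congrArg Prod.fst h
  · exact (adj_inr_inr.1 (hs hjl hik (by simpa using h))).1

lemma card_toRight_le_three (hs : (gadgetGraph S).IsClique s) : #s.toRight ≤ 3 := by
  obtain h | ⟨⟨i, k⟩, hik⟩ := s.toRight.eq_empty_or_nonempty
  · simp [h]
  · simpa using card_le_card (toRight_subset_gadget hs hik)

lemma card_toRight_le_one_of_el'_mem (hS : E3CInstance S) (hs : (gadgetGraph S).IsClique s)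
    {x : U} (hx : el' x ∈ s) : #s.toRight ≤ 1 := by
  refine card_le_one.2 fun ⟨i, k⟩ hik ⟨j, l⟩ hjl => ?_
  obtain rfl : i = j := by simpa using toRight_subset_gadget hs hik hjl
  rw [mem_toRight] at hik hjl
  have hk := hs hx hik (by simp [el'])
  have hl := hs hx hjl (by simp [el'])
  rw [eq_of_el'_adj_inr hS hk hl]

lemma card_toRight_le_two_of_el_mem (hS : E3CInstance S) (hs : (gadgetGraph S).IsClique s)
    {x : U} (hx : el x ∈ s) : #s.toRight ≤ 2 := by
  by_contra! h
  obtain ⟨⟨i, k⟩, hik⟩ := card_pos.1 (by omega : 0 < #s.toRight)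
  have hgadget := eq_of_subset_of_card_le (toRight_subset_gadget hs hik) (by simpa [Nat.succ_le_iff] using h)
  exact not_forall_el_adj_inr hS x i fun l =>
    hs hx (mem_toRight.1 (by simp [hgadget])) (by simp [el])

end gadgetGraph

open gadgetGraph

/-- The gadget graph constructed from any E3C instance is `K_4`-free: it contains no set
of four pairwise adjacent vertices. -/
theorem stmt_1 {U : Type*} {m : ℕ} (S : Fin m → U × U × U) (hS : E3CInstance S) :
    (gadgetGraph S).CliqueFree 4 := by
  intro s hs
  have hsum := card_toLeft_add_card_toRight (u := s)
  have hL := card_toLeft_le_two hs.isClique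
  have hR := card_toRight_le_three hs.isClique
  rw [hs.card_eq] at hsum
  obtain ⟨p, hp⟩ := card_pos.1 (by omega : 0 < #s.toLeft)
  rw [mem_toLeft] at hp
  obtain ⟨x, hx⟩ : ∃ x, el' x ∈ s := by
    rcases p with x | x
    · have := card_toRight_le_two_of_el_mem hS hs.isClique hp
      exact ⟨x, el'_mem_of_el_mem hs.isClique hp (by omega)⟩
    · exact ⟨x, hp⟩
  have := card_toRight_le_one_of_el'_mem hS hs.isClique hx
  omega
end

section
/- Let S_i = (u, v, w) be a set of the E3C instance. The seven vertex sets {u, u', a_i}, {v, v', c_i}, {w, w', b_i}, {a_i, b_i, c_i}, {u, b_i}, {v, a_i}, {w, c_i} are all cliques of the gadget graph, and every edge in E_i ∪ {uu', vv', ww'} is contained in exactly one of these seven cliques. -/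
open scoped Classical

/-- `edgeIn e D` says that both endpoints of the (potential) edge `e` lie in the
vertex set `D`, i.e. the clique with vertex set `D` contains the edge `e`. -/
def edgeIn {V : Type*} (e : Sym2 V) (D : Finset V) : Prop := ∀ x ∈ e, x ∈ D

set_option maxHeartbeats 4000000 in
/-- Let `S i = (u, v, w)` be a set of the E3C instance. The seven vertex sets
`{u, u', a_i}`, `{v, v', c_i}`, `{w, w', b_i}`, `{a_i, b_i, c_i}`, `{u, b_i}`,
`{v, a_i}`, `{w, c_i}` are all cliques of the gadget graph, and every edge in
`E_i ∪ {uu', vv', ww'}` is contained in exactly one of these seven cliques. -/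
theorem stmt_2 {U : Type*} [DecidableEq U] {m : ℕ} (S : Fin m → U × U × U)
    (hS : E3CInstance S) (i : Fin m) (u v w : U) (hSi : S i = (u, v, w))
    (F : Finset (Finset (GVert U m)))
    (hF : F = {{el u, el' u, va i}, {el v, el' v, vc i}, {el w, el' w, vb i},
      {va i, vb i, vc i}, {el u, vb i}, {el v, va i}, {el w, vc i}}) :
    (∀ D ∈ F, (gadgetGraph S).IsClique (D : Set (GVert U m))) ∧
      ∀ e ∈ Ei S i ∪ ({s(el u, el' u), s(el v, el' v), s(el w, el' w)} :
          Set (Sym2 (GVert U m))),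
        ∃! D, D ∈ F ∧ edgeIn e D := by

  obtain ⟨h1, h2, h3⟩ := hS i
  rw [hSi] at h1 h2 h3
  have h1' := h1.symm; have h2' := h2.symm; have h3' := h3.symm
  subst hF
  have key : ∀ x y : GVert U m, s(x,y) ∈ gadgetEdges S → x ≠ y →
      (gadgetGraph S).Adj x y := by
    intro x y hm hne
    rw [gadgetGraph, SimpleGraph.fromEdgeSet_adj]; exact ⟨hm, hne⟩
  constructor
  · intro D hD
    simp only [Finset.mem_insert, Finset.mem_singleton] at hD
    rcases hD with rfl|rfl|rfl|rfl|rfl|rfl|rfl <;>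
    · intro x hx y hy hxy
      simp only [Finset.coe_insert, Set.mem_insert_iff, Finset.coe_singleton,
        Set.mem_singleton_iff] at hx hy
      apply key _ _ _ hxy
      simp only [gadgetEdges, Set.mem_union, Set.mem_setOf_eq]
      rcases hx with rfl|rfl|rfl <;> rcases hy with rfl|rfl|rfl <;>
        first
          | exact absurd rfl hxy
          | exact Or.inl ⟨_, rfl⟩
          | exact Or.inl ⟨_, Sym2.eq_swap⟩
          | exact Or.inr ⟨i, by simp [Ei, hSi, Sym2.eq_swap]⟩
  · intro e he
    simp only [Ei, hSi, Set.mem_union, Set.mem_insert_iff,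
      Set.mem_singleton_iff] at he
    rcases he with (rfl|rfl|rfl|rfl|rfl|rfl|rfl|rfl|rfl|rfl|rfl|rfl)|(rfl|rfl|rfl)
    · refine ⟨({va i, vb i, vc i} : Finset (GVert U m)), ⟨by simp, ?_⟩, ?_⟩
      · intro x hx
        rcases Sym2.mem_iff.mp hx with rfl|rfl <;> simp
      · rintro D ⟨hD, hin⟩
        have ha := hin _ (Sym2.mem_mk_left _ _)
        have hb := hin _ (Sym2.mem_mk_right _ _)
        simp only [Finset.mem_insert, Finset.mem_singleton] at hD
        rcases hD with rfl|rfl|rfl|rfl|rfl|rfl|rfl <;>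
          first
            | rfl
            | (exfalso; simp [el, el', va, vb, vc, h1, h2, h3, h1', h2', h3'] at ha hb)
    · refine ⟨({va i, vb i, vc i} : Finset (GVert U m)), ⟨by simp, ?_⟩, ?_⟩
      · intro x hx
        rcases Sym2.mem_iff.mp hx with rfl|rfl <;> simp
      · rintro D ⟨hD, hin⟩
        have ha := hin _ (Sym2.mem_mk_left _ _)
        have hb := hin _ (Sym2.mem_mk_right _ _)
        simp only [Finset.mem_insert, Finset.mem_singleton] at hD
        rcases hD with rfl|rfl|rfl|rfl|rfl|rfl|rfl <;>
          first
            | rfl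
            | (exfalso; simp [el, el', va, vb, vc, h1, h2, h3, h1', h2', h3'] at ha hb)
    · refine ⟨({va i, vb i, vc i} : Finset (GVert U m)), ⟨by simp, ?_⟩, ?_⟩
      · intro x hx
        rcases Sym2.mem_iff.mp hx with rfl|rfl <;> simp
      · rintro D ⟨hD, hin⟩
        have ha := hin _ (Sym2.mem_mk_left _ _)
        have hb := hin _ (Sym2.mem_mk_right _ _)
        simp only [Finset.mem_insert, Finset.mem_singleton] at hD
        rcases hD with rfl|rfl|rfl|rfl|rfl|rfl|rfl <;>
          first
            | rfl
            | (exfalso; simp [el, el', va, vb, vc, h1, h2, h3, h1', h2', h3'] at ha hb)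
    · refine ⟨({el u, el' u, va i} : Finset (GVert U m)), ⟨by simp, ?_⟩, ?_⟩
      · intro x hx
        rcases Sym2.mem_iff.mp hx with rfl|rfl <;> simp
      · rintro D ⟨hD, hin⟩
        have ha := hin _ (Sym2.mem_mk_left _ _)
        have hb := hin _ (Sym2.mem_mk_right _ _)
        simp only [Finset.mem_insert, Finset.mem_singleton] at hD
        rcases hD with rfl|rfl|rfl|rfl|rfl|rfl|rfl <;>
          first
            | rfl
            | (exfalso; simp [el, el', va, vb, vc, h1, h2, h3, h1', h2', h3'] at ha hb)
    · refine ⟨({el u, vb i} : Finset (GVert U m)), ⟨by simp, ?_⟩, ?_⟩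
      · intro x hx
        rcases Sym2.mem_iff.mp hx with rfl|rfl <;> simp
      · rintro D ⟨hD, hin⟩
        have ha := hin _ (Sym2.mem_mk_left _ _)
        have hb := hin _ (Sym2.mem_mk_right _ _)
        simp only [Finset.mem_insert, Finset.mem_singleton] at hD
        rcases hD with rfl|rfl|rfl|rfl|rfl|rfl|rfl <;>
          first
            | rfl
            | (exfalso; simp [el, el', va, vb, vc, h1, h2, h3, h1', h2', h3'] at ha hb)
    · refine ⟨({el u, el' u, va i} : Finset (GVert U m)), ⟨by simp, ?_⟩, ?_⟩
      · intro x hx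
        rcases Sym2.mem_iff.mp hx with rfl|rfl <;> simp
      · rintro D ⟨hD, hin⟩
        have ha := hin _ (Sym2.mem_mk_left _ _)
        have hb := hin _ (Sym2.mem_mk_right _ _)
        simp only [Finset.mem_insert, Finset.mem_singleton] at hD
        rcases hD with rfl|rfl|rfl|rfl|rfl|rfl|rfl <;>
          first
            | rfl
            | (exfalso; simp [el, el', va, vb, vc, h1, h2, h3, h1', h2', h3'] at ha hb)
    · refine ⟨({el v, va i} : Finset (GVert U m)), ⟨by simp, ?_⟩, ?_⟩
      · intro x hx
        rcases Sym2.mem_iff.mp hx with rfl|rfl <;> simp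
      · rintro D ⟨hD, hin⟩
        have ha := hin _ (Sym2.mem_mk_left _ _)
        have hb := hin _ (Sym2.mem_mk_right _ _)
        simp only [Finset.mem_insert, Finset.mem_singleton] at hD
        rcases hD with rfl|rfl|rfl|rfl|rfl|rfl|rfl <;>
          first
            | rfl
            | (exfalso; simp [el, el', va, vb, vc, h1, h2, h3, h1', h2', h3'] at ha hb)
    · refine ⟨({el v, el' v, vc i} : Finset (GVert U m)), ⟨by simp, ?_⟩, ?_⟩
      · intro x hx
        rcases Sym2.mem_iff.mp hx with rfl|rfl <;> simp
      · rintro D ⟨hD, hin⟩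
        have ha := hin _ (Sym2.mem_mk_left _ _)
        have hb := hin _ (Sym2.mem_mk_right _ _)
        simp only [Finset.mem_insert, Finset.mem_singleton] at hD
        rcases hD with rfl|rfl|rfl|rfl|rfl|rfl|rfl <;>
          first
            | rfl
            | (exfalso; simp [el, el', va, vb, vc, h1, h2, h3, h1', h2', h3'] at ha hb)
    · refine ⟨({el v, el' v, vc i} : Finset (GVert U m)), ⟨by simp, ?_⟩, ?_⟩
      · intro x hx
        rcases Sym2.mem_iff.mp hx with rfl|rfl <;> simp
      · rintro D ⟨hD, hin⟩
        have ha := hin _ (Sym2.mem_mk_left _ _)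
        have hb := hin _ (Sym2.mem_mk_right _ _)
        simp only [Finset.mem_insert, Finset.mem_singleton] at hD
        rcases hD with rfl|rfl|rfl|rfl|rfl|rfl|rfl <;>
          first
            | rfl
            | (exfalso; simp [el, el', va, vb, vc, h1, h2, h3, h1', h2', h3'] at ha hb)
    · refine ⟨({el w, el' w, vb i} : Finset (GVert U m)), ⟨by simp, ?_⟩, ?_⟩
      · intro x hx
        rcases Sym2.mem_iff.mp hx with rfl|rfl <;> simp
      · rintro D ⟨hD, hin⟩
        have ha := hin _ (Sym2.mem_mk_left _ _)
        have hb := hin _ (Sym2.mem_mk_right _ _)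
        simp only [Finset.mem_insert, Finset.mem_singleton] at hD
        rcases hD with rfl|rfl|rfl|rfl|rfl|rfl|rfl <;>
          first
            | rfl
            | (exfalso; simp [el, el', va, vb, vc, h1, h2, h3, h1', h2', h3'] at ha hb)
    · refine ⟨({el w, vc i} : Finset (GVert U m)), ⟨by simp, ?_⟩, ?_⟩
      · intro x hx
        rcases Sym2.mem_iff.mp hx with rfl|rfl <;> simp
      · rintro D ⟨hD, hin⟩
        have ha := hin _ (Sym2.mem_mk_left _ _)
        have hb := hin _ (Sym2.mem_mk_right _ _)
        simp only [Finset.mem_insert, Finset.mem_singleton] at hD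
        rcases hD with rfl|rfl|rfl|rfl|rfl|rfl|rfl <;>
          first
            | rfl
            | (exfalso; simp [el, el', va, vb, vc, h1, h2, h3, h1', h2', h3'] at ha hb)
    · refine ⟨({el w, el' w, vb i} : Finset (GVert U m)), ⟨by simp, ?_⟩, ?_⟩
      · intro x hx
        rcases Sym2.mem_iff.mp hx with rfl|rfl <;> simp
      · rintro D ⟨hD, hin⟩
        have ha := hin _ (Sym2.mem_mk_left _ _)
        have hb := hin _ (Sym2.mem_mk_right _ _)
        simp only [Finset.mem_insert, Finset.mem_singleton] at hD
        rcases hD with rfl|rfl|rfl|rfl|rfl|rfl|rfl <;>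
          first
            | rfl
            | (exfalso; simp [el, el', va, vb, vc, h1, h2, h3, h1', h2', h3'] at ha hb)
    · refine ⟨({el u, el' u, va i} : Finset (GVert U m)), ⟨by simp, ?_⟩, ?_⟩
      · intro x hx
        rcases Sym2.mem_iff.mp hx with rfl|rfl <;> simp
      · rintro D ⟨hD, hin⟩
        have ha := hin _ (Sym2.mem_mk_left _ _)
        have hb := hin _ (Sym2.mem_mk_right _ _)
        simp only [Finset.mem_insert, Finset.mem_singleton] at hD
        rcases hD with rfl|rfl|rfl|rfl|rfl|rfl|rfl <;>
          first
            | rfl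
            | (exfalso; simp [el, el', va, vb, vc, h1, h2, h3, h1', h2', h3'] at ha hb)
    · refine ⟨({el v, el' v, vc i} : Finset (GVert U m)), ⟨by simp, ?_⟩, ?_⟩
      · intro x hx
        rcases Sym2.mem_iff.mp hx with rfl|rfl <;> simp
      · rintro D ⟨hD, hin⟩
        have ha := hin _ (Sym2.mem_mk_left _ _)
        have hb := hin _ (Sym2.mem_mk_right _ _)
        simp only [Finset.mem_insert, Finset.mem_singleton] at hD
        rcases hD with rfl|rfl|rfl|rfl|rfl|rfl|rfl <;>
          first
            | rfl
            | (exfalso; simp [el, el', va, vb, vc, h1, h2, h3, h1', h2', h3'] at ha hb)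
    · refine ⟨({el w, el' w, vb i} : Finset (GVert U m)), ⟨by simp, ?_⟩, ?_⟩
      · intro x hx
        rcases Sym2.mem_iff.mp hx with rfl|rfl <;> simp
      · rintro D ⟨hD, hin⟩
        have ha := hin _ (Sym2.mem_mk_left _ _)
        have hb := hin _ (Sym2.mem_mk_right _ _)
        simp only [Finset.mem_insert, Finset.mem_singleton] at hD
        rcases hD with rfl|rfl|rfl|rfl|rfl|rfl|rfl <;>
          first
            | rfl
            | (exfalso; simp [el, el', va, vb, vc, h1, h2, h3, h1', h2', h3'] at ha hb)
end

section
/- Let S_i = (u, v, w) be a set of the E3C instance. The six vertex sets {u, a_i, b_i}, {v, a_i, c_i}, {w, c_i, b_i}, {u', a_i}, {v', c_i}, {w', b_i} are all cliques of the gadget graph, and every edge in E_i is contained in exactly one of these six cliques. -/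
open scoped Classical

lemma edgeIn_mk {V : Type*} (a b : V) (D : Finset V) :
    edgeIn s(a, b) D ↔ a ∈ D ∧ b ∈ D := by
  constructor
  · intro h; exact ⟨h a (by simp), h b (by simp)⟩
  · rintro ⟨ha, hb⟩ x hx
    rcases Sym2.mem_iff.mp hx with rfl | rfl <;> assumption

lemma adj_of_mem_Ei {U : Type*} {m : ℕ} (S : Fin m → U × U × U) (i : Fin m)
    {x y : GVert U m} (hne : x ≠ y) (h : s(x, y) ∈ Ei S i) :
    (gadgetGraph S).Adj x y := by
  rw [gadgetGraph, SimpleGraph.fromEdgeSet_adj]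
  exact ⟨Or.inr ⟨i, h⟩, hne⟩

section NeLemmas
variable {U : Type*} {m : ℕ}

@[simp] lemma el_eq_el {u w : U} : (el u : GVert U m) = el w ↔ u = w := by simp [el]
@[simp] lemma el'_eq_el' {u w : U} : (el' u : GVert U m) = el' w ↔ u = w := by simp [el']
@[simp] lemma el_ne_el' {u w : U} : (el u : GVert U m) ≠ el' w := by simp [el, el']
@[simp] lemma el'_ne_el {u w : U} : (el' u : GVert U m) ≠ el w := by simp [el, el']
@[simp] lemma el_ne_va {u : U} {i : Fin m} : (el u : GVert U m) ≠ va i := by simp [el, va]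
@[simp] lemma va_ne_el {u : U} {i : Fin m} : (va i : GVert U m) ≠ el u := by simp [el, va]
@[simp] lemma el_ne_vb {u : U} {i : Fin m} : (el u : GVert U m) ≠ vb i := by simp [el, vb]
@[simp] lemma vb_ne_el {u : U} {i : Fin m} : (vb i : GVert U m) ≠ el u := by simp [el, vb]
@[simp] lemma el_ne_vc {u : U} {i : Fin m} : (el u : GVert U m) ≠ vc i := by simp [el, vc]
@[simp] lemma vc_ne_el {u : U} {i : Fin m} : (vc i : GVert U m) ≠ el u := by simp [el, vc]
@[simp] lemma elp_ne_va {u : U} {i : Fin m} : (el' u : GVert U m) ≠ va i := by simp [el', va]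
@[simp] lemma va_ne_elp {u : U} {i : Fin m} : (va i : GVert U m) ≠ el' u := by simp [el', va]
@[simp] lemma elp_ne_vb {u : U} {i : Fin m} : (el' u : GVert U m) ≠ vb i := by simp [el', vb]
@[simp] lemma vb_ne_elp {u : U} {i : Fin m} : (vb i : GVert U m) ≠ el' u := by simp [el', vb]
@[simp] lemma elp_ne_vc {u : U} {i : Fin m} : (el' u : GVert U m) ≠ vc i := by simp [el', vc]
@[simp] lemma vc_ne_elp {u : U} {i : Fin m} : (vc i : GVert U m) ≠ el' u := by simp [el', vc]
@[simp] lemma va_ne_vb {i j : Fin m} : (va i : GVert U m) ≠ vb j := by simp [va, vb]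
@[simp] lemma va_ne_vc {i j : Fin m} : (va i : GVert U m) ≠ vc j := by simp [va, vc]
@[simp] lemma vb_ne_va {i j : Fin m} : (vb i : GVert U m) ≠ va j := by simp [vb, va]
@[simp] lemma vb_ne_vc {i j : Fin m} : (vb i : GVert U m) ≠ vc j := by simp [vb, vc]
@[simp] lemma vc_ne_va {i j : Fin m} : (vc i : GVert U m) ≠ va j := by simp [vc, va]
@[simp] lemma vc_ne_vb {i j : Fin m} : (vc i : GVert U m) ≠ vb j := by simp [vc, vb]

end NeLemmas

set_option maxHeartbeats 4000000 in
/-- Let `S i = (u, v, w)` be a set of the E3C instance. The six vertex sets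
`{u, a_i, b_i}`, `{v, a_i, c_i}`, `{w, c_i, b_i}`, `{u', a_i}`, `{v', c_i}`, `{w', b_i}`
are all cliques of the gadget graph, and every edge in `E_i` is contained in exactly one
of these six cliques. -/
theorem stmt_3 {U : Type*} [DecidableEq U] {m : ℕ} (S : Fin m → U × U × U)
    (hS : E3CInstance S) (i : Fin m) (u v w : U) (hSi : S i = (u, v, w))
    (F : Finset (Finset (GVert U m)))
    (hF : F = {{el u, va i, vb i}, {el v, va i, vc i}, {el w, vc i, vb i},
      {el' u, va i}, {el' v, vc i}, {el' w, vb i}}) :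
    (∀ D ∈ F, (gadgetGraph S).IsClique (D : Set (GVert U m))) ∧
      ∀ e ∈ Ei S i, ∃! D, D ∈ F ∧ edgeIn e D := by
  have h1 : u ≠ v := by have := (hS i).1; rw [hSi] at this; exact this
  have h2 : u ≠ w := by have := (hS i).2.1; rw [hSi] at this; exact this
  have h3 : v ≠ w := by have := (hS i).2.2; rw [hSi] at this; exact this
  have h1' : v ≠ u := h1.symm
  have h2' : w ≠ u := h2.symm
  have h3' : w ≠ v := h3.symm
  have hEi : Ei S i = {s(va i, vb i), s(va i, vc i), s(vb i, vc i),
      s(va i, el u), s(vb i, el u), s(va i, el' u),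
      s(va i, el v), s(vc i, el v), s(vc i, el' v),
      s(vb i, el w), s(vc i, el w), s(vb i, el' w)} := by
    rw [Ei, hSi]
  subst hF
  have mm1 : s(va i, vb i) ∈ Ei S i := by
    rw [hEi]; simp
  have mm2 : s(va i, vc i) ∈ Ei S i := by
    rw [hEi]; simp
  have mm3 : s(vb i, vc i) ∈ Ei S i := by
    rw [hEi]; simp
  have mm4 : s(va i, el u) ∈ Ei S i := by
    rw [hEi]; simp
  have mm5 : s(vb i, el u) ∈ Ei S i := by
    rw [hEi]; simp
  have mm6 : s(va i, el' u) ∈ Ei S i := by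
    rw [hEi]; simp
  have mm7 : s(va i, el v) ∈ Ei S i := by
    rw [hEi]; simp
  have mm8 : s(vc i, el v) ∈ Ei S i := by
    rw [hEi]; simp
  have mm9 : s(vc i, el' v) ∈ Ei S i := by
    rw [hEi]; simp
  have mm10 : s(vb i, el w) ∈ Ei S i := by
    rw [hEi]; simp
  have mm11 : s(vc i, el w) ∈ Ei S i := by
    rw [hEi]; simp
  have mm12 : s(vb i, el' w) ∈ Ei S i := by
    rw [hEi]; simp
  have A1 : (gadgetGraph S).Adj (va i) (vb i) := adj_of_mem_Ei S i (by simp) mm1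
  have A2 : (gadgetGraph S).Adj (va i) (vc i) := adj_of_mem_Ei S i (by simp) mm2
  have A3 : (gadgetGraph S).Adj (vb i) (vc i) := adj_of_mem_Ei S i (by simp) mm3
  have A4 : (gadgetGraph S).Adj (va i) (el u) := adj_of_mem_Ei S i (by simp) mm4
  have A5 : (gadgetGraph S).Adj (vb i) (el u) := adj_of_mem_Ei S i (by simp) mm5
  have A6 : (gadgetGraph S).Adj (va i) (el' u) := adj_of_mem_Ei S i (by simp) mm6
  have A7 : (gadgetGraph S).Adj (va i) (el v) := adj_of_mem_Ei S i (by simp) mm7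
  have A8 : (gadgetGraph S).Adj (vc i) (el v) := adj_of_mem_Ei S i (by simp) mm8
  have A9 : (gadgetGraph S).Adj (vc i) (el' v) := adj_of_mem_Ei S i (by simp) mm9
  have A10 : (gadgetGraph S).Adj (vb i) (el w) := adj_of_mem_Ei S i (by simp) mm10
  have A11 : (gadgetGraph S).Adj (vc i) (el w) := adj_of_mem_Ei S i (by simp) mm11
  have A12 : (gadgetGraph S).Adj (vb i) (el' w) := adj_of_mem_Ei S i (by simp) mm12
  constructor
  · intro D hD
    simp only [Finset.mem_insert, Finset.mem_singleton] at hD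
    rcases hD with rfl | rfl | rfl | rfl | rfl | rfl <;>
    · intro x hx y hy hxy
      simp only [Finset.coe_insert, Set.mem_insert_iff, Finset.coe_singleton,
        Set.mem_singleton_iff] at hx hy
      (first | (rcases hx with rfl | rfl | rfl) | (rcases hx with rfl | rfl)) <;>
        (first | (rcases hy with rfl | rfl | rfl) | (rcases hy with rfl | rfl)) <;>
        first
          | exact absurd rfl hxy
          | exact A1
          | exact A1.symm
          | exact A2
          | exact A2.symm
          | exact A3
          | exact A3.symm
          | exact A4
          | exact A4.symm
          | exact A5
          | exact A5.symm
          | exact A6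
          | exact A6.symm
          | exact A7
          | exact A7.symm
          | exact A8
          | exact A8.symm
          | exact A9
          | exact A9.symm
          | exact A10
          | exact A10.symm
          | exact A11
          | exact A11.symm
          | exact A12
          | exact A12.symm
  · intro e he
    rw [hEi] at he
    simp only [Set.mem_insert_iff, Set.mem_singleton_iff] at he
    rcases he with rfl | rfl | rfl | rfl | rfl | rfl | rfl | rfl | rfl | rfl | rfl | rfl
    · refine ⟨{el u, va i, vb i}, ⟨by simp, by rw [edgeIn_mk]; exact ⟨by simp, by simp⟩⟩, ?_⟩
      rintro D ⟨hD, hin⟩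
      rw [edgeIn_mk] at hin
      simp only [Finset.mem_insert, Finset.mem_singleton] at hD
      rcases hD with rfl | rfl | rfl | rfl | rfl | rfl <;>
        first
          | rfl
          | (exfalso; revert hin; simp [h1, h2, h3, h1', h2', h3'])
    · refine ⟨{el v, va i, vc i}, ⟨by simp, by rw [edgeIn_mk]; exact ⟨by simp, by simp⟩⟩, ?_⟩
      rintro D ⟨hD, hin⟩
      rw [edgeIn_mk] at hin
      simp only [Finset.mem_insert, Finset.mem_singleton] at hD
      rcases hD with rfl | rfl | rfl | rfl | rfl | rfl <;>
        first
          | rfl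
          | (exfalso; revert hin; simp [h1, h2, h3, h1', h2', h3'])
    · refine ⟨{el w, vc i, vb i}, ⟨by simp, by rw [edgeIn_mk]; exact ⟨by simp, by simp⟩⟩, ?_⟩
      rintro D ⟨hD, hin⟩
      rw [edgeIn_mk] at hin
      simp only [Finset.mem_insert, Finset.mem_singleton] at hD
      rcases hD with rfl | rfl | rfl | rfl | rfl | rfl <;>
        first
          | rfl
          | (exfalso; revert hin; simp [h1, h2, h3, h1', h2', h3'])
    · refine ⟨{el u, va i, vb i}, ⟨by simp, by rw [edgeIn_mk]; exact ⟨by simp, by simp⟩⟩, ?_⟩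
      rintro D ⟨hD, hin⟩
      rw [edgeIn_mk] at hin
      simp only [Finset.mem_insert, Finset.mem_singleton] at hD
      rcases hD with rfl | rfl | rfl | rfl | rfl | rfl <;>
        first
          | rfl
          | (exfalso; revert hin; simp [h1, h2, h3, h1', h2', h3'])
    · refine ⟨{el u, va i, vb i}, ⟨by simp, by rw [edgeIn_mk]; exact ⟨by simp, by simp⟩⟩, ?_⟩
      rintro D ⟨hD, hin⟩
      rw [edgeIn_mk] at hin
      simp only [Finset.mem_insert, Finset.mem_singleton] at hD
      rcases hD with rfl | rfl | rfl | rfl | rfl | rfl <;>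
        first
          | rfl
          | (exfalso; revert hin; simp [h1, h2, h3, h1', h2', h3'])
    · refine ⟨{el' u, va i}, ⟨by simp, by rw [edgeIn_mk]; exact ⟨by simp, by simp⟩⟩, ?_⟩
      rintro D ⟨hD, hin⟩
      rw [edgeIn_mk] at hin
      simp only [Finset.mem_insert, Finset.mem_singleton] at hD
      rcases hD with rfl | rfl | rfl | rfl | rfl | rfl <;>
        first
          | rfl
          | (exfalso; revert hin; simp [h1, h2, h3, h1', h2', h3'])
    · refine ⟨{el v, va i, vc i}, ⟨by simp, by rw [edgeIn_mk]; exact ⟨by simp, by simp⟩⟩, ?_⟩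
      rintro D ⟨hD, hin⟩
      rw [edgeIn_mk] at hin
      simp only [Finset.mem_insert, Finset.mem_singleton] at hD
      rcases hD with rfl | rfl | rfl | rfl | rfl | rfl <;>
        first
          | rfl
          | (exfalso; revert hin; simp [h1, h2, h3, h1', h2', h3'])
    · refine ⟨{el v, va i, vc i}, ⟨by simp, by rw [edgeIn_mk]; exact ⟨by simp, by simp⟩⟩, ?_⟩
      rintro D ⟨hD, hin⟩
      rw [edgeIn_mk] at hin
      simp only [Finset.mem_insert, Finset.mem_singleton] at hD
      rcases hD with rfl | rfl | rfl | rfl | rfl | rfl <;>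
        first
          | rfl
          | (exfalso; revert hin; simp [h1, h2, h3, h1', h2', h3'])
    · refine ⟨{el' v, vc i}, ⟨by simp, by rw [edgeIn_mk]; exact ⟨by simp, by simp⟩⟩, ?_⟩
      rintro D ⟨hD, hin⟩
      rw [edgeIn_mk] at hin
      simp only [Finset.mem_insert, Finset.mem_singleton] at hD
      rcases hD with rfl | rfl | rfl | rfl | rfl | rfl <;>
        first
          | rfl
          | (exfalso; revert hin; simp [h1, h2, h3, h1', h2', h3'])
    · refine ⟨{el w, vc i, vb i}, ⟨by simp, by rw [edgeIn_mk]; exact ⟨by simp, by simp⟩⟩, ?_⟩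
      rintro D ⟨hD, hin⟩
      rw [edgeIn_mk] at hin
      simp only [Finset.mem_insert, Finset.mem_singleton] at hD
      rcases hD with rfl | rfl | rfl | rfl | rfl | rfl <;>
        first
          | rfl
          | (exfalso; revert hin; simp [h1, h2, h3, h1', h2', h3'])
    · refine ⟨{el w, vc i, vb i}, ⟨by simp, by rw [edgeIn_mk]; exact ⟨by simp, by simp⟩⟩, ?_⟩
      rintro D ⟨hD, hin⟩
      rw [edgeIn_mk] at hin
      simp only [Finset.mem_insert, Finset.mem_singleton] at hD
      rcases hD with rfl | rfl | rfl | rfl | rfl | rfl <;>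
        first
          | rfl
          | (exfalso; revert hin; simp [h1, h2, h3, h1', h2', h3'])
    · refine ⟨{el' w, vb i}, ⟨by simp, by rw [edgeIn_mk]; exact ⟨by simp, by simp⟩⟩, ?_⟩
      rintro D ⟨hD, hin⟩
      rw [edgeIn_mk] at hin
      simp only [Finset.mem_insert, Finset.mem_singleton] at hD
      rcases hD with rfl | rfl | rfl | rfl | rfl | rfl <;>
        first
          | rfl
          | (exfalso; revert hin; simp [h1, h2, h3, h1', h2', h3'])
end

section
/- Any set of cliques of the gadget graph such that every one of the twelve edges of E_i is contained in at least one clique of the set has cardinality at least 6. In particular, for any edge-weighted clique decomposition C of the gadget graph, the set C_i of cliques of C containing at least one edge of E_i satisfies |C_i| ≥ 6. -/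
open scoped Classical

/-- `IsEWCD G w k C wt` says that the finite set `C` of cliques of `G`, each clique `D ∈ C`
carrying the positive rational weight `wt D`, is an edge-weighted clique decomposition of
size at most `k` of the graph `G` whose edge weights are given by `w`: for every edge `e`
of `G`, the weights of the cliques of `C` containing both endpoints of `e` sum to `w e`. -/
def IsEWCD {V : Type*} (G : SimpleGraph V) (w : Sym2 V → ℚ) (k : ℕ)
    (C : Finset (Finset V)) (wt : Finset V → ℚ) : Prop :=
  C.card ≤ k ∧
  (∀ D ∈ C, G.IsClique (D : Set V)) ∧
  (∀ D ∈ C, 0 < wt D) ∧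
  (∀ e ∈ G.edgeSet, ∑ D ∈ C.filter (fun D => edgeIn e D), wt D = w e)

section Aux
variable {U : Type*} {m : ℕ} {S : Fin m → U × U × U}

private lemma notadj_inl_inl (x y : U ⊕ U)
    (h : ∀ u : U, ¬(x = Sum.inl u ∧ y = Sum.inr u) ∧ ¬(x = Sum.inr u ∧ y = Sum.inl u)) :
    ¬ (gadgetGraph S).Adj (Sum.inl x) (Sum.inl y) := by
  intro hadj
  rw [gadgetGraph, SimpleGraph.fromEdgeSet_adj] at hadj
  obtain ⟨hmem, -⟩ := hadj
  rcases hmem with ⟨u, hu⟩ | ⟨j, hj⟩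
  · rw [Sym2.eq_iff] at hu
    simp only [el, el'] at hu
    rcases hu with ⟨h1, h2⟩ | ⟨h1, h2⟩
    · exact (h u).1 ⟨Sum.inl.inj h1, Sum.inl.inj h2⟩
    · exact (h u).2 ⟨Sum.inl.inj h1, Sum.inl.inj h2⟩
  · simp only [Ei, Set.mem_insert_iff, Set.mem_singleton_iff, Sym2.eq_iff, va, vb, vc, el, el'] at hj
    tauto

private lemma notadj_el_el (u v : U) : ¬ (gadgetGraph S).Adj (el u) (el v) :=
  notadj_inl_inl _ _ (fun w => by constructor <;> rintro ⟨h1, h2⟩ <;> simp_all)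

private lemma notadj_el'_el' (u v : U) : ¬ (gadgetGraph S).Adj (el' u) (el' v) :=
  notadj_inl_inl _ _ (fun w => by constructor <;> rintro ⟨h1, h2⟩ <;> simp_all)

private lemma notadj_el_el' {u v : U} (huv : u ≠ v) : ¬ (gadgetGraph S).Adj (el u) (el' v) :=
  notadj_inl_inl _ _ (fun w => by constructor <;> rintro ⟨h1, h2⟩ <;> simp_all)

private lemma notadj_vb_el' {i : Fin m} {x : U} (hx : x ≠ (S i).2.2) :
    ¬ (gadgetGraph S).Adj (vb i) (el' x) := by
  intro hadj
  rw [gadgetGraph, SimpleGraph.fromEdgeSet_adj] at hadj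
  obtain ⟨hmem, -⟩ := hadj
  rcases hmem with ⟨u, hu⟩ | ⟨j, hj⟩
  · rw [Sym2.eq_iff] at hu
    simp [el, el', vb] at hu
  · simp only [Ei, Set.mem_insert_iff, Set.mem_singleton_iff, Sym2.eq_iff, va, vb, vc, el, el',
      Sum.inr.injEq, Sum.inl.injEq, Prod.mk.injEq, reduceCtorEq, false_and, and_false, false_or,
      or_false] at hj
    rcases hj with ⟨⟨rfl, h⟩, h3⟩ | ⟨⟨rfl, h⟩, h3⟩ | ⟨⟨rfl, -⟩, h3⟩
    · exact absurd h (by decide)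
    · exact absurd h (by decide)
    · exact hx h3

private lemma notadj_va_el' {i : Fin m} {x : U} (hx : x ≠ (S i).1) :
    ¬ (gadgetGraph S).Adj (va i) (el' x) := by
  intro hadj
  rw [gadgetGraph, SimpleGraph.fromEdgeSet_adj] at hadj
  obtain ⟨hmem, -⟩ := hadj
  rcases hmem with ⟨u, hu⟩ | ⟨j, hj⟩
  · rw [Sym2.eq_iff] at hu
    simp [el, el', va] at hu
  · simp only [Ei, Set.mem_insert_iff, Set.mem_singleton_iff, Sym2.eq_iff, va, vb, vc, el, el',
      Sum.inr.injEq, Sum.inl.injEq, Prod.mk.injEq, reduceCtorEq, false_and, and_false, false_or,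
      or_false] at hj
    rcases hj with ⟨⟨rfl, -⟩, h3⟩ | ⟨⟨rfl, h⟩, h3⟩ | ⟨⟨rfl, h⟩, h3⟩
    · exact hx h3
    · exact absurd h (by decide)
    · exact absurd h (by decide)

private lemma notadj_vc_el' {i : Fin m} {x : U} (hx : x ≠ (S i).2.1) :
    ¬ (gadgetGraph S).Adj (vc i) (el' x) := by
  intro hadj
  rw [gadgetGraph, SimpleGraph.fromEdgeSet_adj] at hadj
  obtain ⟨hmem, -⟩ := hadj
  rcases hmem with ⟨u, hu⟩ | ⟨j, hj⟩
  · rw [Sym2.eq_iff] at hu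
    simp [el, el', vc] at hu
  · simp only [Ei, Set.mem_insert_iff, Set.mem_singleton_iff, Sym2.eq_iff, va, vb, vc, el, el',
      Sum.inr.injEq, Sum.inl.injEq, Prod.mk.injEq, reduceCtorEq, false_and, and_false, false_or,
      or_false] at hj
    rcases hj with ⟨⟨rfl, h⟩, h3⟩ | ⟨⟨rfl, -⟩, h3⟩ | ⟨⟨rfl, h⟩, h3⟩
    · exact absurd h (by decide)
    · exact hx h3
    · exact absurd h (by decide)

private lemma sep {D E : Finset (GVert U m)} {x y : GVert U m}
    (hD : (gadgetGraph S).IsClique (D : Set (GVert U m)))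
    (hx : x ∈ D) (hy : y ∈ E) (hxy : x ≠ y)
    (hna : ¬ (gadgetGraph S).Adj x y) : D ≠ E := by
  intro h
  subst h
  exact hna (hD (Finset.mem_coe.mpr hx) (Finset.mem_coe.mpr hy) hxy)

end Aux
/-- Any set of cliques of the gadget graph such that every one of the twelve edges of `E_i`
is contained in at least one clique of the set has cardinality at least `6`. In particular,
for any edge-weighted clique decomposition `C` of the gadget graph, the set `C_i` of cliques
of `C` containing at least one edge of `E_i` satisfies `|C_i| ≥ 6`. -/
theorem stmt_5 {U : Type*} [DecidableEq U] {m : ℕ} (S : Fin m → U × U × U)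
    (hS : E3CInstance S) (i : Fin m) :
    (∀ F : Finset (Finset (GVert U m)),
        (∀ D ∈ F, (gadgetGraph S).IsClique (D : Set (GVert U m))) →
        (∀ e ∈ Ei S i, ∃ D ∈ F, edgeIn e D) → 6 ≤ F.card) ∧
      ∀ (k : ℕ) (C : Finset (Finset (GVert U m))) (wt : Finset (GVert U m) → ℚ),
        IsEWCD (gadgetGraph S) (fun _ => 1) k C wt →
        6 ≤ (C.filter fun D => ∃ e ∈ Ei S i, edgeIn e D).card := by

  obtain ⟨h1, h2, h3⟩ := hS i
  have part1 : ∀ F : Finset (Finset (GVert U m)),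
      (∀ D ∈ F, (gadgetGraph S).IsClique (D : Set (GVert U m))) →
      (∀ e ∈ Ei S i, ∃ D ∈ F, edgeIn e D) → 6 ≤ F.card := by
    intro F hclique hcover
    obtain ⟨D1, hF1, hE1⟩ := hcover s(vb i, el (S i).1) (by simp [Ei])
    obtain ⟨D2, hF2, hE2⟩ := hcover s(va i, el (S i).2.1) (by simp [Ei])
    obtain ⟨D3, hF3, hE3⟩ := hcover s(vc i, el (S i).2.2) (by simp [Ei])
    obtain ⟨D4, hF4, hE4⟩ := hcover s(va i, el' (S i).1) (by simp [Ei])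
    obtain ⟨D5, hF5, hE5⟩ := hcover s(vc i, el' (S i).2.1) (by simp [Ei])
    obtain ⟨D6, hF6, hE6⟩ := hcover s(vb i, el' (S i).2.2) (by simp [Ei])
    have m1b : vb i ∈ D1 := hE1 _ (Sym2.mem_mk_left _ _)
    have m1u : el (S i).1 ∈ D1 := hE1 _ (Sym2.mem_mk_right _ _)
    have m2a : va i ∈ D2 := hE2 _ (Sym2.mem_mk_left _ _)
    have m2v : el (S i).2.1 ∈ D2 := hE2 _ (Sym2.mem_mk_right _ _)
    have m3c : vc i ∈ D3 := hE3 _ (Sym2.mem_mk_left _ _)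
    have m3w : el (S i).2.2 ∈ D3 := hE3 _ (Sym2.mem_mk_right _ _)
    have m4u : el' (S i).1 ∈ D4 := hE4 _ (Sym2.mem_mk_right _ _)
    have m5v : el' (S i).2.1 ∈ D5 := hE5 _ (Sym2.mem_mk_right _ _)
    have m6w : el' (S i).2.2 ∈ D6 := hE6 _ (Sym2.mem_mk_right _ _)
    have n12 : D1 ≠ D2 := sep (hclique D1 hF1) m1u m2v (by simpa [el] using h1) (notadj_el_el _ _)
    have n13 : D1 ≠ D3 := sep (hclique D1 hF1) m1u m3w (by simpa [el] using h2) (notadj_el_el _ _)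
    have n14 : D1 ≠ D4 := sep (hclique D1 hF1) m1b m4u (by simp [vb, el']) (notadj_vb_el' h2)
    have n15 : D1 ≠ D5 := sep (hclique D1 hF1) m1u m5v (by simp [el, el']) (notadj_el_el' h1)
    have n16 : D1 ≠ D6 := sep (hclique D1 hF1) m1u m6w (by simp [el, el']) (notadj_el_el' h2)
    have n23 : D2 ≠ D3 := sep (hclique D2 hF2) m2v m3w (by simpa [el] using h3) (notadj_el_el _ _)
    have n24 : D2 ≠ D4 := sep (hclique D2 hF2) m2v m4u (by simp [el, el']) (notadj_el_el' h1.symm)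
    have n25 : D2 ≠ D5 := sep (hclique D2 hF2) m2a m5v (by simp [va, el']) (notadj_va_el' h1.symm)
    have n26 : D2 ≠ D6 := sep (hclique D2 hF2) m2v m6w (by simp [el, el']) (notadj_el_el' h3)
    have n34 : D3 ≠ D4 := sep (hclique D3 hF3) m3w m4u (by simp [el, el']) (notadj_el_el' h2.symm)
    have n35 : D3 ≠ D5 := sep (hclique D3 hF3) m3w m5v (by simp [el, el']) (notadj_el_el' h3.symm)
    have n36 : D3 ≠ D6 := sep (hclique D3 hF3) m3c m6w (by simp [vc, el']) (notadj_vc_el' h3.symm)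
    have n45 : D4 ≠ D5 := sep (hclique D4 hF4) m4u m5v (by simpa [el'] using h1) (notadj_el'_el' _ _)
    have n46 : D4 ≠ D6 := sep (hclique D4 hF4) m4u m6w (by simpa [el'] using h2) (notadj_el'_el' _ _)
    have n56 : D5 ≠ D6 := sep (hclique D5 hF5) m5v m6w (by simpa [el'] using h3) (notadj_el'_el' _ _)
    have hsub : ({D1, D2, D3, D4, D5, D6} : Finset (Finset (GVert U m))) ⊆ F := by
      intro D hD
      simp only [Finset.mem_insert, Finset.mem_singleton] at hD
      rcases hD with rfl | rfl | rfl | rfl | rfl | rfl <;> assumption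
    have hcard : ({D1, D2, D3, D4, D5, D6} : Finset (Finset (GVert U m))).card = 6 := by
      rw [Finset.card_insert_of_notMem (by simp [n12, n13, n14, n15, n16]),
        Finset.card_insert_of_notMem (by simp [n23, n24, n25, n26]),
        Finset.card_insert_of_notMem (by simp [n34, n35, n36]),
        Finset.card_insert_of_notMem (by simp [n45, n46]),
        Finset.card_insert_of_notMem (by simp [n56]),
        Finset.card_singleton]
    calc 6 = ({D1, D2, D3, D4, D5, D6} : Finset (Finset (GVert U m))).card := hcard.symm
      _ ≤ F.card := Finset.card_le_card hsub
  refine ⟨part1, ?_⟩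
  intro k C wt hC
  obtain ⟨-, hcl, -, hsum⟩ := hC
  refine part1 _ (fun D hD => hcl D (Finset.mem_filter.mp hD).1) ?_
  intro e he
  have heE : e ∈ (gadgetGraph S).edgeSet := by
    rw [gadgetGraph, SimpleGraph.edgeSet_fromEdgeSet]
    refine ⟨Or.inr ⟨i, he⟩, ?_⟩
    simp only [Ei, Set.mem_insert_iff, Set.mem_singleton_iff] at he
    rcases he with rfl | rfl | rfl | rfl | rfl | rfl | rfl | rfl | rfl | rfl | rfl | rfl <;>
      simp [Sym2.mk_isDiag_iff, va, vb, vc, el, el', Prod.ext_iff]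
  have hsum1 := hsum e heE
  have hne : (C.filter fun D => edgeIn e D).Nonempty := by
    rw [Finset.nonempty_iff_ne_empty]
    intro h
    rw [h] at hsum1
    simp at hsum1
  obtain ⟨D, hD⟩ := hne
  rw [Finset.mem_filter] at hD
  exact ⟨D, Finset.mem_filter.mpr ⟨hD.1, e, he, hD.2⟩, hD.2⟩
end

section
/- For distinct indices i ≠ j, no clique of the gadget graph contains both an edge of E_i and an edge of E_j; consequently, for any edge-weighted clique decomposition C of the gadget graph, C_i ∩ C_j = ∅. -/
open scoped Classical

lemma tri_mem {U : Type*} {m : ℕ} {S : Fin m → U × U × U} {i : Fin m}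
    {e : Sym2 (GVert U m)} (he : e ∈ Ei S i) {D : Finset (GVert U m)}
    (hD : edgeIn e D) : ∃ t : Fin 3, (Sum.inr (i, t) : GVert U m) ∈ D := by
  simp only [Ei, Set.mem_insert_iff, Set.mem_singleton_iff] at he
  rcases he with h|h|h|h|h|h|h|h|h|h|h|h <;> subst h <;>
    first
    | exact ⟨0, hD _ (Sym2.mem_mk_left _ _)⟩
    | exact ⟨1, hD _ (Sym2.mem_mk_left _ _)⟩
    | exact ⟨2, hD _ (Sym2.mem_mk_left _ _)⟩

lemma no_cross {U : Type*} {m : ℕ} (S : Fin m → U × U × U) {i j : Fin m}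
    (hij : i ≠ j) (t t' : Fin 3) :
    ¬ (gadgetGraph S).Adj (Sum.inr (i, t)) (Sum.inr (j, t')) := by
  intro h
  rw [gadgetGraph, SimpleGraph.fromEdgeSet_adj] at h
  obtain ⟨hmem, -⟩ := h
  rcases hmem with ⟨u, hu⟩ | ⟨k, hk⟩
  · simp [el, el', Sym2.eq, Sym2.rel_iff', Prod.ext_iff] at hu
  · simp only [Ei, Set.mem_insert_iff, Set.mem_singleton_iff] at hk
    rcases hk with h|h|h|h|h|h|h|h|h|h|h|h <;>
      rw [Sym2.eq_iff] at h <;>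
      rcases h with ⟨h1, h2⟩ | ⟨h1, h2⟩ <;>
      simp_all [va, vb, vc, el, el', Prod.ext_iff]

/-- For distinct indices `i ≠ j`, no clique of the gadget graph contains both an edge of
`E_i` and an edge of `E_j`; consequently, for any edge-weighted clique decomposition `C`
of the gadget graph, `C_i ∩ C_j = ∅`. -/
theorem stmt_6 {U : Type*} [DecidableEq U] {m : ℕ} (S : Fin m → U × U × U)
    (hS : E3CInstance S) (i j : Fin m) (hij : i ≠ j) :
    (∀ D : Finset (GVert U m), (gadgetGraph S).IsClique (D : Set (GVert U m)) →
        ¬((∃ e ∈ Ei S i, edgeIn e D) ∧ (∃ e ∈ Ei S j, edgeIn e D))) ∧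
      ∀ (k : ℕ) (C : Finset (Finset (GVert U m))) (wt : Finset (GVert U m) → ℚ),
        IsEWCD (gadgetGraph S) (fun _ => 1) k C wt →
        (C.filter fun D => ∃ e ∈ Ei S i, edgeIn e D) ∩
          (C.filter fun D => ∃ e ∈ Ei S j, edgeIn e D) = ∅ := by
  have key : ∀ D : Finset (GVert U m), (gadgetGraph S).IsClique (D : Set (GVert U m)) →
      ¬((∃ e ∈ Ei S i, edgeIn e D) ∧ (∃ e ∈ Ei S j, edgeIn e D)) := by
    rintro D hclique ⟨⟨e1, he1, hin1⟩, ⟨e2, he2, hin2⟩⟩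
    obtain ⟨t, ht⟩ := tri_mem he1 hin1
    obtain ⟨t', ht'⟩ := tri_mem he2 hin2
    have hne : (Sum.inr (i, t) : GVert U m) ≠ Sum.inr (j, t') := by
      simp [Prod.ext_iff]; intro h; exact absurd h hij
    exact no_cross S hij t t'
      (hclique (Finset.mem_coe.mpr ht) (Finset.mem_coe.mpr ht') hne)
  refine ⟨key, ?_⟩
  intro k C wt hC
  rw [Finset.eq_empty_iff_forall_notMem]
  intro D hD
  rw [Finset.mem_inter, Finset.mem_filter, Finset.mem_filter] at hD
  exact key D (hC.2.1 D hD.1.1) ⟨hD.1.2, hD.2.2⟩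
end

section
/- Let S_i = (u, v, w) be a set of the E3C instance. The only two cliques of the gadget graph that contain the edge c_iw are {c_i, w} and {b_i, c_i, w}. -/
open scoped Classical

/-! The vertices `c_i` and `w` are adjacent and `b_i` is their only common neighbour: the other
neighbours of `c_i` are `a_i`, `v` and `v'`, and since `u`, `v`, `w` are distinct none of these is
adjacent to `w`. In any graph, the cliques through an edge whose endpoints have exactly one common
neighbour `z` are the edge itself and the triangle it spans with `z`. -/

namespace SimpleGraph

variable {V : Type*} {G : SimpleGraph V}

theorem isClique_and_mem_and_mem_iff_of_commonNeighbors_eq_singleton [DecidableEq V] {x y z : V}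
    (hxy : G.Adj x y) (hxyz : G.commonNeighbors x y = {z}) (D : Finset V) :
    (G.IsClique (D : Set V) ∧ x ∈ D ∧ y ∈ D) ↔ D = {x, y} ∨ D = {z, x, y} := by
  have hz : G.Adj x z ∧ G.Adj y z := (mem_commonNeighbors ..).1 (hxyz ▸ Set.mem_singleton z)
  constructor
  · rintro ⟨hD, hx, hy⟩
    have hsub : ∀ t ∈ D, t = z ∨ t = x ∨ t = y := by
      intro t ht
      by_contra! h
      have ht : t ∈ G.commonNeighbors x y :=
        ⟨hD hx ht (Ne.symm h.2.1), hD hy ht (Ne.symm h.2.2)⟩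
      exact h.1 (by rwa [hxyz] at ht)
    by_cases hzD : z ∈ D
    · right
      ext t
      simp only [Finset.mem_insert, Finset.mem_singleton]
      exact ⟨hsub t, by rintro (rfl | rfl | rfl) <;> assumption⟩
    · left
      ext t
      simp only [Finset.mem_insert, Finset.mem_singleton]
      refine ⟨fun ht => ?_, by rintro (rfl | rfl) <;> assumption⟩
      rcases hsub t ht with rfl | h | h
      exacts [absurd ht hzD, Or.inl h, Or.inr h]
  · have hpair : G.IsClique ({x, y} : Set V) := isClique_pair.2 fun _ => hxy
    rintro (rfl | rfl)
    · simpa using hpair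
    · refine ⟨?_, by simp, by simp⟩
      simp only [Finset.coe_insert, Finset.coe_singleton]
      exact isClique_insert.2 ⟨hpair, by rintro b (rfl | rfl) - ; exacts [hz.1.symm, hz.2.symm]⟩

end SimpleGraph

section Gadget

variable {U : Type*} {m : ℕ} {S : Fin m → U × U × U}

attribute [local simp] gadgetGraph gadgetEdges Ei va vb vc el el'

theorem gadgetGraph_adj_vc_iff (i : Fin m) (t : GVert U m) :
    (gadgetGraph S).Adj (vc i) t ↔
      t = va i ∨ t = vb i ∨ t = el (S i).2.1 ∨ t = el' (S i).2.1 ∨ t = el (S i).2.2 := by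
  aesop

theorem gadgetGraph_commonNeighbors_vc_el (hS : E3CInstance S) (i : Fin m) :
    (gadgetGraph S).commonNeighbors (vc i) (el (S i).2.2) = {vb i} := by
  obtain ⟨huv, huw, hvw⟩ := hS i
  ext t
  rw [SimpleGraph.mem_commonNeighbors, gadgetGraph_adj_vc_iff, Set.mem_singleton_iff]
  constructor
  · rintro ⟨rfl | rfl | rfl | rfl | rfl, h⟩ <;> aesop
  · rintro rfl
    exact ⟨by simp, by aesop⟩

end Gadget

theorem stmt_7_general {U : Type*} {m : ℕ} (S : Fin m → U × U × U)
    (hS : E3CInstance S) (i : Fin m) (u v w : U) (hSi : S i = (u, v, w))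
    (D : Finset (GVert U m)) :
    ((gadgetGraph S).IsClique (D : Set (GVert U m)) ∧ vc i ∈ D ∧ el w ∈ D) ↔
      (D = {vc i, el w} ∨ D = {vb i, vc i, el w}) := by
  obtain rfl : w = (S i).2.2 := by simp [hSi]
  exact SimpleGraph.isClique_and_mem_and_mem_iff_of_commonNeighbors_eq_singleton
    ((gadgetGraph_adj_vc_iff i _).2 (by simp)) (gadgetGraph_commonNeighbors_vc_el hS i) D

/-- Let `S i = (u, v, w)` be a set of the E3C instance. The only two cliques of the gadget
graph that contain the edge `c_iw` are `{c_i, w}` and `{b_i, c_i, w}`. -/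
theorem stmt_7 {U : Type*} [DecidableEq U] {m : ℕ} (S : Fin m → U × U × U)
    (hS : E3CInstance S) (i : Fin m) (u v w : U) (hSi : S i = (u, v, w))
    (D : Finset (GVert U m)) :
    ((gadgetGraph S).IsClique (D : Set (GVert U m)) ∧ vc i ∈ D ∧ el w ∈ D) ↔
      (D = {vc i, el w} ∨ D = {vb i, vc i, el w}) :=
  stmt_7_general S hS i u v w hSi D
end

section
/- Let S_i = (u, v, w) be a set of the E3C instance. Any set of cliques of the gadget graph such that every one of the nine edges of E_i \ {b_iw', b_iw, c_iw} is contained in at least one clique of the set has cardinality at least 5. -/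
open scoped Classical

section Aux
variable {U : Type*} {m : ℕ} {S : Fin m → U × U × U}

lemma adj_elim {x y : GVert U m} (h : (gadgetGraph S).Adj x y) :
    (∃ z : U, s(x,y) = s(el z, el' z)) ∨ ∃ j : Fin m, s(x,y) ∈ Ei S j := by
  rw [gadgetGraph, SimpleGraph.fromEdgeSet_adj] at h
  exact h.1

lemma na1 {i : Fin m} {z : U} (hz : z ≠ (S i).2.1) :
    ¬ (gadgetGraph S).Adj (el' z) (vc i) := by
  intro h
  rcases adj_elim h with ⟨t, ht⟩ | ⟨j, hj⟩
  · simp [el', el, vc, Sym2.eq, Sym2.rel_iff'] at ht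
  · simp [Ei, el', el, va, vb, vc, Sym2.eq, Sym2.rel_iff', Prod.ext_iff] at hj
    obtain ⟨h1, rfl⟩ := hj
    exact hz h1

lemma na2 {i : Fin m} {z : U} (hz : z ≠ (S i).2.2) :
    ¬ (gadgetGraph S).Adj (el' z) (vb i) := by
  intro h
  rcases adj_elim h with ⟨t, ht⟩ | ⟨j, hj⟩
  · simp [el', el, vb, Sym2.eq, Sym2.rel_iff'] at ht
  · simp [Ei, el', el, va, vb, vc, Sym2.eq, Sym2.rel_iff', Prod.ext_iff] at hj
    obtain ⟨h1, rfl⟩ := hj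
    exact hz h1

lemma na3 {z t : U} (hz : z ≠ t) :
    ¬ (gadgetGraph S).Adj (el' z) (el t) := by
  intro h
  rcases adj_elim h with ⟨x, hx⟩ | ⟨j, hj⟩
  · simp [el', el, Sym2.eq, Sym2.rel_iff'] at hx
    obtain ⟨rfl, rfl⟩ := hx
    exact hz rfl
  · simp [Ei, el', el, va, vb, vc, Sym2.eq, Sym2.rel_iff', Prod.ext_iff] at hj

lemma na4 {i : Fin m} {z : U} (hz : z ≠ (S i).1) :
    ¬ (gadgetGraph S).Adj (el' z) (va i) := by
  intro h
  rcases adj_elim h with ⟨t, ht⟩ | ⟨j, hj⟩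
  · simp [el', el, va, Sym2.eq, Sym2.rel_iff'] at ht
  · simp [Ei, el', el, va, vb, vc, Sym2.eq, Sym2.rel_iff', Prod.ext_iff] at hj
    obtain ⟨h1, rfl⟩ := hj
    exact hz h1

lemma na5 {i : Fin m} {z : U} (h1 : z ≠ (S i).1) (h2 : z ≠ (S i).2.2) :
    ¬ (gadgetGraph S).Adj (vb i) (el z) := by
  intro h
  rcases adj_elim h with ⟨t, ht⟩ | ⟨j, hj⟩
  · simp [el', el, vb, Sym2.eq, Sym2.rel_iff'] at ht
  · simp [Ei, el', el, va, vb, vc, Sym2.eq, Sym2.rel_iff', Prod.ext_iff] at hj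
    rcases hj with ⟨rfl, hz⟩ | ⟨rfl, hz⟩
    · exact h1 hz
    · exact h2 hz

lemma na6 {i : Fin m} {z : U} (h1 : z ≠ (S i).2.1) (h2 : z ≠ (S i).2.2) :
    ¬ (gadgetGraph S).Adj (vc i) (el z) := by
  intro h
  rcases adj_elim h with ⟨t, ht⟩ | ⟨j, hj⟩
  · simp [el', el, vc, Sym2.eq, Sym2.rel_iff'] at ht
  · simp [Ei, el', el, va, vb, vc, Sym2.eq, Sym2.rel_iff', Prod.ext_iff] at hj
    rcases hj with ⟨rfl, hz⟩ | ⟨rfl, hz⟩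
    · exact h1 hz
    · exact h2 hz

end Aux

/-- Let `S i = (u, v, w)` be a set of the E3C instance. Any set of cliques of the gadget
graph such that every one of the nine edges of `E_i \ {b_iw', b_iw, c_iw}` is contained
in at least one clique of the set has cardinality at least `5`. -/
theorem stmt_9 {U : Type*} [DecidableEq U] {m : ℕ} (S : Fin m → U × U × U)
    (hS : E3CInstance S) (i : Fin m) (u v w : U) (hSi : S i = (u, v, w))
    (F : Finset (Finset (GVert U m)))
    (hclique : ∀ D ∈ F, (gadgetGraph S).IsClique (D : Set (GVert U m)))
    (hcover : ∀ e ∈ Ei S i \ ({s(vb i, el' w), s(vb i, el w), s(vc i, el w)} :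
        Set (Sym2 (GVert U m))), ∃ D ∈ F, edgeIn e D) :
    5 ≤ F.card := by
  obtain ⟨huv, huw, hvw⟩ := hS i
  rw [hSi] at huv huw hvw
  simp only at huv huw hvw
  have key : ∀ D ∈ F, ∀ x y : GVert U m, x ∈ D → y ∈ D → x ≠ y →
      (gadgetGraph S).Adj x y := by
    intro D hD x y hx hy hne
    exact hclique D hD (by exact_mod_cast hx) (by exact_mod_cast hy) hne
  obtain ⟨D1, hD1F, hD1⟩ := hcover s(va i, el' u)
    (by
      constructor
      · simp [Ei, hSi]
      · simp [el, el', va, vb, vc, Sym2.eq, Sym2.rel_iff', Prod.ext_iff])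
  obtain ⟨D2, hD2F, hD2⟩ := hcover s(vc i, el' v)
    (by
      constructor
      · simp [Ei, hSi]
      · simp [el, el', va, vb, vc, Sym2.eq, Sym2.rel_iff', Prod.ext_iff])
  obtain ⟨D3, hD3F, hD3⟩ := hcover s(vb i, el u)
    (by
      constructor
      · simp [Ei, hSi]
      · simp [el, el', va, vb, vc, Sym2.eq, Sym2.rel_iff', Prod.ext_iff, huw])
  obtain ⟨D4, hD4F, hD4⟩ := hcover s(va i, el v)
    (by
      constructor
      · simp [Ei, hSi]
      · simp [el, el', va, vb, vc, Sym2.eq, Sym2.rel_iff', Prod.ext_iff])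
  obtain ⟨D5, hD5F, hD5⟩ := hcover s(vb i, vc i)
    (by
      constructor
      · simp [Ei, hSi]
      · simp [el, el', va, vb, vc, Sym2.eq, Sym2.rel_iff', Prod.ext_iff])
  have ha1 : va i ∈ D1 := hD1 _ (by simp)
  have hu'1 : el' u ∈ D1 := hD1 _ (by simp)
  have hc2 : vc i ∈ D2 := hD2 _ (by simp)
  have hv'2 : el' v ∈ D2 := hD2 _ (by simp)
  have hb3 : vb i ∈ D3 := hD3 _ (by simp)
  have hu3 : el u ∈ D3 := hD3 _ (by simp)
  have ha4 : va i ∈ D4 := hD4 _ (by simp)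
  have hv4 : el v ∈ D4 := hD4 _ (by simp)
  have hb5 : vb i ∈ D5 := hD5 _ (by simp)
  have hc5 : vc i ∈ D5 := hD5 _ (by simp)
  have hu'ne : u ≠ (S i).2.1 := by rw [hSi]; exact huv
  have hune2 : u ≠ (S i).2.2 := by rw [hSi]; exact huw
  have hvne2 : v ≠ (S i).2.2 := by rw [hSi]; exact hvw
  have hvne1 : v ≠ (S i).1 := by rw [hSi]; exact huv.symm
  have n12 : D1 ≠ D2 := by
    intro h; rw [← h] at hc2
    exact na1 hu'ne (key D1 hD1F _ _ hu'1 hc2 (by simp [el', vc]))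
  have n13 : D1 ≠ D3 := by
    intro h; rw [← h] at hb3
    exact na2 hune2 (key D1 hD1F _ _ hu'1 hb3 (by simp [el', vb]))
  have n14 : D1 ≠ D4 := by
    intro h; rw [← h] at hv4
    exact na3 huv (key D1 hD1F _ _ hu'1 hv4 (by simp [el', el, huv]))
  have n15 : D1 ≠ D5 := by
    intro h; rw [← h] at hc5
    exact na1 hu'ne (key D1 hD1F _ _ hu'1 hc5 (by simp [el', vc]))
  have n23 : D2 ≠ D3 := by
    intro h; rw [← h] at hb3
    exact na2 hvne2 (key D2 hD2F _ _ hv'2 hb3 (by simp [el', vb]))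
  have n24 : D2 ≠ D4 := by
    intro h; rw [← h] at ha4
    exact na4 hvne1 (key D2 hD2F _ _ hv'2 ha4 (by simp [el', va]))
  have n25 : D2 ≠ D5 := by
    intro h; rw [← h] at hb5
    exact na2 hvne2 (key D2 hD2F _ _ hv'2 hb5 (by simp [el', vb]))
  have n34 : D3 ≠ D4 := by
    intro h; rw [← h] at hv4
    exact na5 hvne1 hvne2 (key D3 hD3F _ _ hb3 hv4 (by simp [el, vb]))
  have n35 : D3 ≠ D5 := by
    intro h; rw [h] at hu3
    exact na6 hu'ne hune2 (key D5 hD5F _ _ hc5 hu3 (by simp [el, vc]))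
  have n45 : D4 ≠ D5 := by
    intro h; rw [h] at hv4
    exact na5 hvne1 hvne2 (key D5 hD5F _ _ hb5 hv4 (by simp [el, vb]))
  have hsub : ({D1, D2, D3, D4, D5} : Finset (Finset (GVert U m))) ⊆ F := by
    intro D hD
    simp only [Finset.mem_insert, Finset.mem_singleton] at hD
    rcases hD with rfl | rfl | rfl | rfl | rfl <;> assumption
  have hcard : ({D1, D2, D3, D4, D5} : Finset (Finset (GVert U m))).card = 5 := by
    rw [Finset.card_insert_of_notMem (by simp [n12, n13, n14, n15]),
        Finset.card_insert_of_notMem (by simp [n23, n24, n25]),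
        Finset.card_insert_of_notMem (by simp [n34, n35]),
        Finset.card_insert_of_notMem (by simp [n45]),
        Finset.card_singleton]
  calc 5 = ({D1, D2, D3, D4, D5} : Finset (Finset (GVert U m))).card := hcard.symm
    _ ≤ F.card := Finset.card_le_card hsub
end

section
/- If the gadget graph admits an edge-weighted clique decomposition of size at most 6m + q, then the E3C instance has a solution: there exist q indices i such that the corresponding sets S_i cover all of U. -/
open scoped Classical

section MainProof

variable {U : Type*} {m : ℕ} {S : Fin m → U × U × U}

lemma adj_va_el' {i : Fin m} {x : U} :
    (gadgetGraph S).Adj (va i) (el' x) ↔ x = (S i).1 := by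
  simp [gadgetGraph, gadgetEdges, Ei, el, el', va, vb, vc, Sym2.eq_iff]

lemma adj_vb_el' {i : Fin m} {x : U} :
    (gadgetGraph S).Adj (vb i) (el' x) ↔ x = (S i).2.2 := by
  simp [gadgetGraph, gadgetEdges, Ei, el, el', va, vb, vc, Sym2.eq_iff]

lemma adj_vc_el' {i : Fin m} {x : U} :
    (gadgetGraph S).Adj (vc i) (el' x) ↔ x = (S i).2.1 := by
  simp [gadgetGraph, gadgetEdges, Ei, el, el', va, vb, vc, Sym2.eq_iff]

lemma adj_va_el {i : Fin m} {x : U} :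
    (gadgetGraph S).Adj (va i) (el x) ↔ x = (S i).1 ∨ x = (S i).2.1 := by
  simp [gadgetGraph, gadgetEdges, Ei, el, el', va, vb, vc, Sym2.eq_iff] <;> aesop

lemma adj_vb_el {i : Fin m} {x : U} :
    (gadgetGraph S).Adj (vb i) (el x) ↔ x = (S i).1 ∨ x = (S i).2.2 := by
  simp [gadgetGraph, gadgetEdges, Ei, el, el', va, vb, vc, Sym2.eq_iff] <;> aesop

lemma adj_vc_el {i : Fin m} {x : U} :
    (gadgetGraph S).Adj (vc i) (el x) ↔ x = (S i).2.1 ∨ x = (S i).2.2 := by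
  simp [gadgetGraph, gadgetEdges, Ei, el, el', va, vb, vc, Sym2.eq_iff] <;> aesop

lemma adj_el_el' {x y : U} :
    (gadgetGraph S).Adj (el x) (el' y) ↔ x = y := by
  simp [gadgetGraph, gadgetEdges, Ei, el, el', va, vb, vc, Sym2.eq_iff] <;> aesop

lemma not_adj_el_el {x y : U} : ¬ (gadgetGraph S).Adj (el x) (el y) := by
  simp [gadgetGraph, gadgetEdges, Ei, el, el', va, vb, vc, Sym2.eq_iff]

lemma adj_inr_inr {i j : Fin m} {x y : Fin 3}
    (h : (gadgetGraph S).Adj (Sum.inr (i,x)) (Sum.inr (j,y))) : i = j := by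
  simp [gadgetGraph, gadgetEdges, Ei, el, el', va, vb, vc, Sym2.eq_iff] at h
  aesop

lemma edgeIn_mk_s11 {x y : GVert U m} {D : Finset (GVert U m)} :
    edgeIn s(x,y) D ↔ x ∈ D ∧ y ∈ D := by
  constructor
  · intro h; exact ⟨h x (by simp), h y (by simp)⟩
  · rintro ⟨hx, hy⟩ z hz
    rcases Sym2.mem_iff.1 hz with rfl | rfl <;> assumption

lemma mem_edgeSet_of {x y : GVert U m} (hne : x ≠ y) (hm : s(x,y) ∈ gadgetEdges S) :
    s(x,y) ∈ (gadgetGraph S).edgeSet := by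
  rw [gadgetGraph, SimpleGraph.edgeSet_fromEdgeSet]
  exact ⟨hm, fun hd => hne (Sym2.mk_isDiag_iff.mp hd)⟩

lemma mem_gadgetEdges_of_Ei {e : Sym2 (GVert U m)} {i : Fin m} (h : e ∈ Ei S i) :
    e ∈ gadgetEdges S := Or.inr ⟨i, h⟩

variable {C : Finset (Finset (GVert U m))} {wt : Finset (GVert U m) → ℚ} {k : ℕ}

lemma clique_adj (hC : IsEWCD (gadgetGraph S) (fun _ => 1) k C wt)
    {D : Finset (GVert U m)} (hD : D ∈ C) {x y : GVert U m}
    (hx : x ∈ D) (hy : y ∈ D) (hne : x ≠ y) : (gadgetGraph S).Adj x y :=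
  hC.2.1 D hD (Finset.mem_coe.mpr hx) (Finset.mem_coe.mpr hy) hne

lemma exists_cover (hC : IsEWCD (gadgetGraph S) (fun _ => 1) k C wt)
    {x y : GVert U m} (he : s(x,y) ∈ (gadgetGraph S).edgeSet) :
    ∃ D ∈ C, x ∈ D ∧ y ∈ D := by
  have hsum := hC.2.2.2 _ he
  by_contra hcon
  push_neg at hcon
  have hemp : C.filter (fun D => edgeIn s(x,y) D) = ∅ := by
    refine Finset.filter_eq_empty_iff.2 ?_
    intro D hD hIn
    rw [edgeIn_mk_s11] at hIn
    exact hcon D hD hIn.1 hIn.2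
  rw [hemp] at hsum
  simp at hsum

lemma sum_contradiction (hC : IsEWCD (gadgetGraph S) (fun _ => 1) k C wt)
    {x y z : GVert U m}
    (he1 : s(x,y) ∈ (gadgetGraph S).edgeSet) (he2 : s(x,z) ∈ (gadgetGraph S).edgeSet)
    {Q : Finset (GVert U m)} (hQ : Q ∈ C) (hxQ : x ∈ Q) (hzQ : z ∈ Q) (hyQ : y ∉ Q) :
    ∃ R ∈ C, x ∈ R ∧ y ∈ R ∧ z ∉ R := by
  by_contra hcon
  push_neg at hcon
  set F1 := C.filter (fun D => edgeIn s(x,y) D) with hF1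
  set F2 := C.filter (fun D => edgeIn s(x,z) D) with hF2
  have hsub : insert Q F1 ⊆ F2 := by
    intro D hD
    rcases Finset.mem_insert.1 hD with rfl | hD
    · exact Finset.mem_filter.2 ⟨hQ, edgeIn_mk_s11.2 ⟨hxQ, hzQ⟩⟩
    · have h' := Finset.mem_filter.1 hD
      have hxy := edgeIn_mk_s11.1 h'.2
      have hz := hcon D h'.1 hxy.1 hxy.2
      exact Finset.mem_filter.2 ⟨h'.1, edgeIn_mk_s11.2 ⟨hxy.1, hz⟩⟩
  have hQF1 : Q ∉ F1 := fun hQ1 => hyQ (edgeIn_mk_s11.1 (Finset.mem_filter.1 hQ1).2).2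
  have h1 : ∑ D ∈ F1, wt D = 1 := hC.2.2.2 _ he1
  have h2 : ∑ D ∈ F2, wt D = 1 := hC.2.2.2 _ he2
  have hle : ∑ D ∈ insert Q F1, wt D ≤ ∑ D ∈ F2, wt D :=
    Finset.sum_le_sum_of_subset_of_nonneg hsub
      (fun D hD _ => le_of_lt (hC.2.2.1 D (Finset.filter_subset _ _ hD)))
  rw [Finset.sum_insert hQF1, h1, h2] at hle
  have := hC.2.2.1 Q hQ
  linarith

end MainProof
section GadgetCount

variable {U : Type*} [DecidableEq U] {m : ℕ} {S : Fin m → U × U × U}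
variable {C : Finset (Finset (GVert U m))} {wt : Finset (GVert U m) → ℚ} {k : ℕ}

lemma gadget_card (hC : IsEWCD (gadgetGraph S) (fun _ => 1) k C wt)
    (hS : E3CInstance S) (i : Fin m) :
    6 ≤ (C.filter (fun D => ∃ j : Fin 3, Sum.inr (i,j) ∈ D)).card ∧
    ((∃ D ∈ C, ∃ u : U, el u ∈ D ∧ el' u ∈ D ∧ ∃ j : Fin 3, (Sum.inr (i,j) : GVert U m) ∈ D) →
      7 ≤ (C.filter (fun D => ∃ j : Fin 3, Sum.inr (i,j) ∈ D)).card) := by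
  obtain ⟨h1, h2, h3⟩ := hS i
  -- non-adjacency facts
  have N12 : ¬ (gadgetGraph S).Adj (vc i) (el' (S i).1) := fun h => h1 (adj_vc_el'.1 h)
  have N13 : ¬ (gadgetGraph S).Adj (va i) (el' (S i).2.2) := fun h => h2 (adj_va_el'.1 h).symm
  have N14 : ¬ (gadgetGraph S).Adj (vb i) (el' (S i).1) := fun h => h2 (adj_vb_el'.1 h)
  have N15 : ¬ (gadgetGraph S).Adj (el' (S i).1) (el (S i).2.1) :=
    fun h => h1 (adj_el_el'.1 h.symm).symm
  have N16 : ¬ (gadgetGraph S).Adj (el' (S i).1) (el (S i).2.2) :=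
    fun h => h2 (adj_el_el'.1 h.symm).symm
  have N23 : ¬ (gadgetGraph S).Adj (vb i) (el' (S i).2.1) := fun h => h3 (adj_vb_el'.1 h)
  have N24 : ¬ (gadgetGraph S).Adj (vc i) (el (S i).1) := fun h => (adj_vc_el.1 h).elim h1 h2
  have N25 : ¬ (gadgetGraph S).Adj (va i) (el' (S i).2.1) := fun h => h1 (adj_va_el'.1 h).symm
  have N26 : ¬ (gadgetGraph S).Adj (el' (S i).2.1) (el (S i).2.2) :=
    fun h => h3 (adj_el_el'.1 h.symm).symm
  have N34 : ¬ (gadgetGraph S).Adj (el (S i).1) (el' (S i).2.2) := fun h => h2 (adj_el_el'.1 h)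
  have N35 : ¬ (gadgetGraph S).Adj (vb i) (el (S i).2.1) :=
    fun h => (adj_vb_el.1 h).elim (fun e => h1 e.symm) h3
  have N36 : ¬ (gadgetGraph S).Adj (vc i) (el' (S i).2.2) := fun h => h3 (adj_vc_el'.1 h).symm
  have N56 : ¬ (gadgetGraph S).Adj (va i) (el (S i).2.2) :=
    fun h => (adj_va_el.1 h).elim (fun e => h2 e.symm) (fun e => h3 e.symm)
  -- edges in the edge set
  have E1 : s(va i, el' (S i).1) ∈ (gadgetGraph S).edgeSet :=
    mem_edgeSet_of (by simp [va, el']) (mem_gadgetEdges_of_Ei (i := i) (by simp [Ei, Sym2.eq_iff]))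
  have E2 : s(vc i, el' (S i).2.1) ∈ (gadgetGraph S).edgeSet :=
    mem_edgeSet_of (by simp [vc, el']) (mem_gadgetEdges_of_Ei (i := i) (by simp [Ei, Sym2.eq_iff]))
  have E3 : s(vb i, el' (S i).2.2) ∈ (gadgetGraph S).edgeSet :=
    mem_edgeSet_of (by simp [vb, el']) (mem_gadgetEdges_of_Ei (i := i) (by simp [Ei, Sym2.eq_iff]))
  have E4 : s(vb i, el (S i).1) ∈ (gadgetGraph S).edgeSet :=
    mem_edgeSet_of (by simp [vb, el]) (mem_gadgetEdges_of_Ei (i := i) (by simp [Ei, Sym2.eq_iff]))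
  have E5 : s(va i, el (S i).2.1) ∈ (gadgetGraph S).edgeSet :=
    mem_edgeSet_of (by simp [va, el]) (mem_gadgetEdges_of_Ei (i := i) (by simp [Ei, Sym2.eq_iff]))
  have E6 : s(vc i, el (S i).2.2) ∈ (gadgetGraph S).edgeSet :=
    mem_edgeSet_of (by simp [vc, el]) (mem_gadgetEdges_of_Ei (i := i) (by simp [Ei, Sym2.eq_iff]))
  have Eab : s(va i, vb i) ∈ (gadgetGraph S).edgeSet :=
    mem_edgeSet_of (by simp [va, vb]) (mem_gadgetEdges_of_Ei (i := i) (by simp [Ei, Sym2.eq_iff]))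
  have Ebc : s(vb i, vc i) ∈ (gadgetGraph S).edgeSet :=
    mem_edgeSet_of (by simp [vb, vc]) (mem_gadgetEdges_of_Ei (i := i) (by simp [Ei, Sym2.eq_iff]))
  have Eca : s(vc i, va i) ∈ (gadgetGraph S).edgeSet :=
    mem_edgeSet_of (by simp [vc, va]) (mem_gadgetEdges_of_Ei (i := i) (by simp [Ei, Sym2.eq_iff]))
  have Eau : s(va i, el (S i).1) ∈ (gadgetGraph S).edgeSet :=
    mem_edgeSet_of (by simp [va, el]) (mem_gadgetEdges_of_Ei (i := i) (by simp [Ei, Sym2.eq_iff]))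
  have Ebw : s(vb i, el (S i).2.2) ∈ (gadgetGraph S).edgeSet :=
    mem_edgeSet_of (by simp [vb, el]) (mem_gadgetEdges_of_Ei (i := i) (by simp [Ei, Sym2.eq_iff]))
  have Ecv : s(vc i, el (S i).2.1) ∈ (gadgetGraph S).edgeSet :=
    mem_edgeSet_of (by simp [vc, el]) (mem_gadgetEdges_of_Ei (i := i) (by simp [Ei, Sym2.eq_iff]))
  -- the six representatives
  obtain ⟨D1, hD1C, hD1t, hD1e⟩ := exists_cover hC E1
  obtain ⟨D2, hD2C, hD2t, hD2e⟩ := exists_cover hC E2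
  obtain ⟨D3, hD3C, hD3t, hD3e⟩ := exists_cover hC E3
  obtain ⟨D4, hD4C, hD4t, hD4e⟩ := exists_cover hC E4
  obtain ⟨D5, hD5C, hD5t, hD5e⟩ := exists_cover hC E5
  obtain ⟨D6, hD6C, hD6t, hD6e⟩ := exists_cover hC E6
  -- pairwise distinctness
  have ne12 : D1 ≠ D2 := fun h => N12 (clique_adj hC hD1C (by rw [h]; exact hD2t) hD1e (by simp [vc, el']))
  have ne13 : D1 ≠ D3 := fun h => N13 (clique_adj hC hD1C hD1t (by rw [h]; exact hD3e) (by simp [va, el']))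
  have ne14 : D1 ≠ D4 := fun h => N14 (clique_adj hC hD1C (by rw [h]; exact hD4t) hD1e (by simp [vb, el']))
  have ne15 : D1 ≠ D5 := fun h => N15 (clique_adj hC hD1C hD1e (by rw [h]; exact hD5e) (by simp [el, el']))
  have ne16 : D1 ≠ D6 := fun h => N16 (clique_adj hC hD1C hD1e (by rw [h]; exact hD6e) (by simp [el, el']))
  have ne23 : D2 ≠ D3 := fun h => N23 (clique_adj hC hD2C (by rw [h]; exact hD3t) hD2e (by simp [vb, el']))
  have ne24 : D2 ≠ D4 := fun h => N24 (clique_adj hC hD2C hD2t (by rw [h]; exact hD4e) (by simp [vc, el]))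
  have ne25 : D2 ≠ D5 := fun h => N25 (clique_adj hC hD2C (by rw [h]; exact hD5t) hD2e (by simp [va, el']))
  have ne26 : D2 ≠ D6 := fun h => N26 (clique_adj hC hD2C hD2e (by rw [h]; exact hD6e) (by simp [el, el']))
  have ne34 : D3 ≠ D4 := fun h => N34 (clique_adj hC hD3C (by rw [h]; exact hD4e) hD3e (by simp [el, el']))
  have ne35 : D3 ≠ D5 := fun h => N35 (clique_adj hC hD3C hD3t (by rw [h]; exact hD5e) (by simp [vb, el]))
  have ne36 : D3 ≠ D6 := fun h => N36 (clique_adj hC hD3C (by rw [h]; exact hD6t) hD3e (by simp [vc, el']))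
  have ne45 : D4 ≠ D5 := fun h => N35 (clique_adj hC hD4C hD4t (by rw [h]; exact hD5e) (by simp [vb, el]))
  have ne46 : D4 ≠ D6 := fun h => N24 (clique_adj hC hD4C (by rw [h]; exact hD6t) hD4e (by simp [vc, el]))
  have ne56 : D5 ≠ D6 := fun h => N56 (clique_adj hC hD5C hD5t (by rw [h]; exact hD6e) (by simp [va, el]))
  set G := C.filter (fun D => ∃ j : Fin 3, Sum.inr (i,j) ∈ D) with hG
  have hGa : ∀ {D}, D ∈ C → va i ∈ D → D ∈ G :=
    fun hD h => Finset.mem_filter.2 ⟨hD, ⟨0, h⟩⟩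
  have hGb : ∀ {D}, D ∈ C → vb i ∈ D → D ∈ G :=
    fun hD h => Finset.mem_filter.2 ⟨hD, ⟨1, h⟩⟩
  have hGc : ∀ {D}, D ∈ C → vc i ∈ D → D ∈ G :=
    fun hD h => Finset.mem_filter.2 ⟨hD, ⟨2, h⟩⟩
  have hsub : ({D1, D2, D3, D4, D5, D6} : Finset (Finset (GVert U m))) ⊆ G := by
    intro D hD
    simp only [Finset.mem_insert, Finset.mem_singleton] at hD
    rcases hD with rfl | rfl | rfl | rfl | rfl | rfl
    exacts [hGa hD1C hD1t, hGc hD2C hD2t, hGb hD3C hD3t, hGb hD4C hD4t,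
      hGa hD5C hD5t, hGc hD6C hD6t]
  have hcard6 : ({D1, D2, D3, D4, D5, D6} : Finset (Finset (GVert U m))).card = 6 := by
    rw [Finset.card_insert_of_notMem (by simp [ne12, ne13, ne14, ne15, ne16]),
        Finset.card_insert_of_notMem (by simp [ne23, ne24, ne25, ne26]),
        Finset.card_insert_of_notMem (by simp [ne34, ne35, ne36]),
        Finset.card_insert_of_notMem (by simp [ne45, ne46]),
        Finset.card_insert_of_notMem (by simp [ne56]),
        Finset.card_singleton]
  refine ⟨hcard6 ▸ Finset.card_le_card hsub, ?_⟩
  rintro ⟨Q, hQC, u, huQ, hu'Q, j, hjQ⟩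
  have seven : ∀ R : Finset (GVert U m), R ∈ G →
      R ∉ ({D1, D2, D3, D4, D5, D6} : Finset (Finset (GVert U m))) → 7 ≤ G.card := by
    intro R hRG hRnot
    have hsub7 : insert R ({D1, D2, D3, D4, D5, D6} : Finset (Finset (GVert U m))) ⊆ G := by
      intro D hD
      rcases Finset.mem_insert.1 hD with rfl | hD
      · exact hRG
      · exact hsub hD
    have : (insert R ({D1, D2, D3, D4, D5, D6} : Finset (Finset (GVert U m)))).card = 7 := by
      rw [Finset.card_insert_of_notMem hRnot, hcard6]
    exact this ▸ Finset.card_le_card hsub7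
  fin_cases j
  · -- j = 0 : the vertex is a_i, u = (S i).1
    have hu : u = (S i).1 := adj_va_el'.1 (clique_adj hC hQC hjQ hu'Q (by simp [va, vb, vc, el']))
    subst hu
    have hvbQ : vb i ∉ Q := fun h => N14 (clique_adj hC hQC h hu'Q (by simp [vb, el']))
    obtain ⟨R, hRC, hRa, hRb, hRnu⟩ := sum_contradiction hC Eab Eau hQC hjQ huQ hvbQ
    refine seven R (hGa hRC hRa) ?_
    simp only [Finset.mem_insert, Finset.mem_singleton]
    push_neg
    refine ⟨fun h => N14 (clique_adj hC hRC hRb (by rw [h]; exact hD1e) (by simp [vb, el'])),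
      fun h => N25 (clique_adj hC hRC hRa (by rw [h]; exact hD2e) (by simp [va, el'])),
      fun h => N13 (clique_adj hC hRC hRa (by rw [h]; exact hD3e) (by simp [va, el'])),
      fun h => hRnu (by rw [h]; exact hD4e),
      fun h => N35 (clique_adj hC hRC hRb (by rw [h]; exact hD5e) (by simp [vb, el])),
      fun h => N56 (clique_adj hC hRC hRa (by rw [h]; exact hD6e) (by simp [va, el]))⟩
  · -- j = 1 : the vertex is b_i, u = (S i).2.2
    have hu : u = (S i).2.2 := adj_vb_el'.1 (clique_adj hC hQC hjQ hu'Q (by simp [va, vb, vc, el']))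
    subst hu
    have hvcQ : vc i ∉ Q := fun h => N36 (clique_adj hC hQC h hu'Q (by simp [vc, el']))
    obtain ⟨R, hRC, hRb, hRc, hRnu⟩ := sum_contradiction hC Ebc Ebw hQC hjQ huQ hvcQ
    refine seven R (hGb hRC hRb) ?_
    simp only [Finset.mem_insert, Finset.mem_singleton]
    push_neg
    refine ⟨fun h => N14 (clique_adj hC hRC hRb (by rw [h]; exact hD1e) (by simp [vb, el'])),
      fun h => N23 (clique_adj hC hRC hRb (by rw [h]; exact hD2e) (by simp [vb, el'])),
      fun h => N36 (clique_adj hC hRC hRc (by rw [h]; exact hD3e) (by simp [vc, el'])),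
      fun h => N24 (clique_adj hC hRC hRc (by rw [h]; exact hD4e) (by simp [vc, el])),
      fun h => N35 (clique_adj hC hRC hRb (by rw [h]; exact hD5e) (by simp [vb, el])),
      fun h => hRnu (by rw [h]; exact hD6e)⟩
  · -- j = 2 : the vertex is c_i, u = (S i).2.1
    have hu : u = (S i).2.1 := adj_vc_el'.1 (clique_adj hC hQC hjQ hu'Q (by simp [va, vb, vc, el']))
    subst hu
    have hvaQ : va i ∉ Q := fun h => N25 (clique_adj hC hQC h hu'Q (by simp [va, el']))
    obtain ⟨R, hRC, hRc, hRa, hRnu⟩ := sum_contradiction hC Eca Ecv hQC hjQ huQ hvaQ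
    refine seven R (hGc hRC hRc) ?_
    simp only [Finset.mem_insert, Finset.mem_singleton]
    push_neg
    refine ⟨fun h => N12 (clique_adj hC hRC hRc (by rw [h]; exact hD1e) (by simp [vc, el'])),
      fun h => N25 (clique_adj hC hRC hRa (by rw [h]; exact hD2e) (by simp [va, el'])),
      fun h => N13 (clique_adj hC hRC hRa (by rw [h]; exact hD3e) (by simp [va, el'])),
      fun h => N24 (clique_adj hC hRC hRc (by rw [h]; exact hD4e) (by simp [vc, el])),
      fun h => hRnu (by rw [h]; exact hD5e),
      fun h => N56 (clique_adj hC hRC hRa (by rw [h]; exact hD6e) (by simp [va, el]))⟩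

end GadgetCount
set_option maxHeartbeats 1000000


/-- If the gadget graph admits an edge-weighted clique decomposition of size at most
`6m + q`, then the E3C instance has a solution: there exist `q` indices `i` such that the
corresponding sets `S i` cover all of `U`. -/
theorem stmt_11 {U : Type*} [Fintype U] [DecidableEq U] {m q : ℕ}
    (S : Fin m → U × U × U) (hS : E3CInstance S) (hU : Fintype.card U = 3 * q)
    (h : ∃ (C : Finset (Finset (GVert U m))) (wt : Finset (GVert U m) → ℚ),
      IsEWCD (gadgetGraph S) (fun _ => 1) (6 * m + q) C wt) :
    ∃ T : Finset (Fin m), E3CSolution q S T := by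
  obtain ⟨C, wt, hC⟩ := h
  set G : Fin m → Finset (Finset (GVert U m)) :=
    fun i => C.filter (fun D => ∃ j : Fin 3, Sum.inr (i,j) ∈ D) with hGdef
  set touch : Fin m → Prop := fun i =>
    ∃ D ∈ C, ∃ u : U, el u ∈ D ∧ el' u ∈ D ∧ ∃ j : Fin 3, (Sum.inr (i,j) : GVert U m) ∈ D
    with htouch
  set A : Finset (Fin m) := Finset.univ.filter touch with hA
  set Pure : Finset (Finset (GVert U m)) :=
    C.filter (fun D => (∃ u : U, el u ∈ D ∧ el' u ∈ D) ∧
      ∀ p : Fin m × Fin 3, Sum.inr p ∉ D) with hPure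
  set P : Finset U := Finset.univ.filter (fun u =>
    ∃ D ∈ C, el u ∈ D ∧ el' u ∈ D ∧ ∀ p : Fin m × Fin 3, Sum.inr p ∉ D) with hP
  -- the G i are pairwise disjoint, and disjoint from Pure
  have hGdisj : ∀ i ∈ (Finset.univ : Finset (Fin m)), ∀ j ∈ (Finset.univ : Finset (Fin m)),
      i ≠ j → Disjoint (G i) (G j) := by
    intro i _ j _ hij
    rw [Finset.disjoint_left]
    intro D hDi hDj
    obtain ⟨hDC, x, hx⟩ := Finset.mem_filter.1 hDi
    obtain ⟨_, y, hy⟩ := Finset.mem_filter.1 hDj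
    have hne : (Sum.inr (i,x) : GVert U m) ≠ Sum.inr (j,y) := by simp [hij]
    exact hij (adj_inr_inr (clique_adj hC hDC hx hy hne))
  have hbiU : (Finset.univ.biUnion G).card = ∑ i : Fin m, (G i).card :=
    Finset.card_biUnion hGdisj
  have hPdisj : Disjoint (Finset.univ.biUnion G) Pure := by
    rw [Finset.disjoint_left]
    intro D hD hDP
    obtain ⟨i, _, hDi⟩ := Finset.mem_biUnion.1 hD
    obtain ⟨j, hj⟩ := (Finset.mem_filter.1 hDi).2
    exact (Finset.mem_filter.1 hDP).2.2 (i, j) hj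
  have hsubC : Finset.univ.biUnion G ∪ Pure ⊆ C := by
    intro D hD
    rcases Finset.mem_union.1 hD with hD | hD
    · obtain ⟨i, _, hDi⟩ := Finset.mem_biUnion.1 hD
      exact (Finset.mem_filter.1 hDi).1
    · exact (Finset.mem_filter.1 hD).1
  have hcount : (∑ i : Fin m, (G i).card) + Pure.card ≤ 6 * m + q := by
    calc (∑ i : Fin m, (G i).card) + Pure.card
        = (Finset.univ.biUnion G).card + Pure.card := by rw [hbiU]
      _ = (Finset.univ.biUnion G ∪ Pure).card := (Finset.card_union_of_disjoint hPdisj).symm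
      _ ≤ C.card := Finset.card_le_card hsubC
      _ ≤ 6 * m + q := hC.1
  -- lower bound for the sum
  have hsumlow : 6 * m + A.card ≤ ∑ i : Fin m, (G i).card := by
    have hAc : A.card + (Finset.univ.filter (fun i => ¬ touch i)).card = m := by
      rw [hA, Finset.card_filter_add_card_filter_not, Finset.card_univ,
        Fintype.card_fin]
    have hsum7 : A.card * 7 ≤ ∑ i ∈ A, (G i).card := by
      have := Finset.card_nsmul_le_sum A (fun i => (G i).card) 7
        (fun i hi => (gadget_card hC hS i).2 ((Finset.mem_filter.1 hi).2))
      simpa using this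
    have hsum6 : (Finset.univ.filter (fun i => ¬ touch i)).card * 6 ≤
        ∑ i ∈ Finset.univ.filter (fun i => ¬ touch i), (G i).card := by
      have := Finset.card_nsmul_le_sum (Finset.univ.filter (fun i => ¬ touch i))
        (fun i => (G i).card) 6 (fun i _ => (gadget_card hC hS i).1)
      simpa using this
    have hsplit : ∑ i ∈ A, (G i).card +
        ∑ i ∈ Finset.univ.filter (fun i => ¬ touch i), (G i).card =
        ∑ i : Fin m, (G i).card := by
      rw [hA]
      exact Finset.sum_filter_add_sum_filter_not _ _ _
    omega
  -- |P| ≤ |Pure|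
  have hPPure : P.card ≤ Pure.card := by
    have hex : ∀ u ∈ P, ∃ D, D ∈ Pure ∧ el u ∈ D ∧ el' u ∈ D := by
      intro u hu
      obtain ⟨_, D, hDC, h1, h2, h3⟩ := Finset.mem_filter.1 hu
      exact ⟨D, Finset.mem_filter.2 ⟨hDC, ⟨u, h1, h2⟩, h3⟩, h1, h2⟩
    set f : U → Finset (GVert U m) := fun u =>
      if h : ∃ D, D ∈ Pure ∧ el u ∈ D ∧ el' u ∈ D then h.choose else ∅ with hf
    have hfspec : ∀ u ∈ P, f u ∈ Pure ∧ el u ∈ f u := by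
      intro u hu
      have h := hex u hu
      simp only [hf, dif_pos h]
      exact ⟨h.choose_spec.1, h.choose_spec.2.1⟩
    refine Finset.card_le_card_of_injOn f (fun u hu => (hfspec u hu).1) ?_
    intro u hu v hv hfe
    by_contra hne
    have h1 := hfspec u hu
    have h2 := hfspec v hv
    have h2' : el v ∈ f u := hfe ▸ h2.2
    have hadj := clique_adj hC ((Finset.mem_filter.1 h1.1).1) h1.2 h2' (by simp [el, hne])
    exact not_adj_el_el hadj
  -- coverage
  have hcover : ∀ u : U, u ∈ P ∨ ∃ i ∈ A, u = (S i).1 ∨ u = (S i).2.1 ∨ u = (S i).2.2 := by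
    intro u
    have he : s(el u, el' u) ∈ (gadgetGraph S).edgeSet :=
      mem_edgeSet_of (by simp [el, el']) (Or.inl ⟨u, rfl⟩)
    obtain ⟨D, hDC, h1, h2⟩ := exists_cover hC he
    by_cases hinr : ∃ p : Fin m × Fin 3, Sum.inr p ∈ D
    · obtain ⟨⟨i, j⟩, hp⟩ := hinr
      right
      refine ⟨i, Finset.mem_filter.2 ⟨Finset.mem_univ i, D, hDC, u, h1, h2, j, hp⟩, ?_⟩
      have hne : (Sum.inr (i, j) : GVert U m) ≠ el' u := by simp [el']
      have hadj := clique_adj hC hDC hp h2 hne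
      fin_cases j
      · exact Or.inl (adj_va_el'.1 hadj)
      · exact Or.inr (Or.inr (adj_vb_el'.1 hadj))
      · exact Or.inr (Or.inl (adj_vc_el'.1 hadj))
    · left
      push_neg at hinr
      exact Finset.mem_filter.2 ⟨Finset.mem_univ u, D, hDC, h1, h2, hinr⟩
  -- cardinality of the universe
  have hUcard : 3 * q ≤ P.card + 3 * A.card := by
    have hsubU : (Finset.univ : Finset U) ⊆
        P ∪ A.biUnion (fun i => {(S i).1, (S i).2.1, (S i).2.2}) := by
      intro u _
      rcases hcover u with hu | ⟨i, hi, hu⟩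
      · exact Finset.mem_union.2 (Or.inl hu)
      · refine Finset.mem_union.2 (Or.inr (Finset.mem_biUnion.2 ⟨i, hi, ?_⟩))
        simp only [Finset.mem_insert, Finset.mem_singleton]
        exact hu
    calc 3 * q = (Finset.univ : Finset U).card := by rw [Finset.card_univ, hU]
      _ ≤ (P ∪ A.biUnion (fun i => {(S i).1, (S i).2.1, (S i).2.2})).card :=
          Finset.card_le_card hsubU
      _ ≤ P.card + (A.biUnion (fun i => {(S i).1, (S i).2.1, (S i).2.2})).card :=
          Finset.card_union_le _ _
      _ ≤ P.card + ∑ i ∈ A, ({(S i).1, (S i).2.1, (S i).2.2} : Finset U).card :=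
          Nat.add_le_add_left (Finset.card_biUnion_le) _
      _ ≤ P.card + ∑ i ∈ A, 3 := by
          refine Nat.add_le_add_left (Finset.sum_le_sum ?_) _
          intro i _
          refine le_trans (Finset.card_insert_le _ _) (Nat.succ_le_succ ?_)
          exact le_trans (Finset.card_insert_le _ _) (Nat.succ_le_succ (by simp))
      _ = P.card + 3 * A.card := by rw [Finset.sum_const, smul_eq_mul, mul_comm]
  have hAq : A.card = q ∧ P.card = 0 := by
    have h1 : 6 * m + A.card + P.card ≤ 6 * m + q := by
      calc 6 * m + A.card + P.card ≤ (∑ i : Fin m, (G i).card) + Pure.card :=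
            Nat.add_le_add hsumlow hPPure
        _ ≤ 6 * m + q := hcount
    omega
  refine ⟨A, hAq.1, ?_⟩
  intro x
  rcases hcover x with hx | ⟨i, hi, hx⟩
  · rw [Finset.card_eq_zero.1 hAq.2] at hx
    exact absurd hx (Finset.notMem_empty x)
  · exact ⟨i, hi, hx⟩
end

section
/- Let G be a finite simple graph with positive rational edge weights, and let D be a clique of G with at least one edge such that all edges within D have the same weight w and such that every clique of G containing an edge of D has all of its vertices in D. If G admits an edge-weighted clique decomposition of size at most k, then G admits an edge-weighted clique decomposition of size at most k in which D itself appears with weight w and no other clique of the decomposition contains an edge of D. -/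
open scoped Classical

/-- Let `G` be a finite simple graph with positive rational edge weights, and let `D` be a
clique of `G` with at least one edge such that all edges within `D` have the same weight
`w₀` and such that every clique of `G` containing an edge of `D` has all of its vertices
in `D`. If `G` admits an edge-weighted clique decomposition of size at most `k`, then `G`
admits an edge-weighted clique decomposition of size at most `k` in which `D` itself
appears with weight `w₀` and no other clique of the decomposition contains an edge
of `D`. -/
theorem stmt_13 {V : Type*} [Fintype V] [DecidableEq V] (G : SimpleGraph V)
    (w : Sym2 V → ℚ) (hw : ∀ e ∈ G.edgeSet, 0 < w e) (k : ℕ)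
    (D : Finset V) (w₀ : ℚ) (hD : G.IsClique (D : Set V)) (hD2 : 2 ≤ D.card)
    (hsame : ∀ x ∈ D, ∀ y ∈ D, x ≠ y → w s(x, y) = w₀)
    (hlocal : ∀ E : Finset V, G.IsClique (E : Set V) →
      (∃ x ∈ D, ∃ y ∈ D, x ≠ y ∧ x ∈ E ∧ y ∈ E) → (E : Set V) ⊆ (D : Set V))
    (h : ∃ (C : Finset (Finset V)) (wt : Finset V → ℚ), IsEWCD G w k C wt) :
    ∃ (C : Finset (Finset V)) (wt : Finset V → ℚ), IsEWCD G w k C wt ∧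
      D ∈ C ∧ wt D = w₀ ∧
      ∀ E ∈ C, E ≠ D → ¬∃ x ∈ D, ∃ y ∈ D, x ≠ y ∧ x ∈ E ∧ y ∈ E := by
  obtain ⟨C, wt, hcard, hclq, hpos, hsum⟩ := h
  -- two distinct vertices of D
  obtain ⟨a, ha, b, hb, hab⟩ := Finset.one_lt_card.mp (by omega : 1 < D.card)
  have hadj : G.Adj a b := hD ha hb hab
  have hedge : s(a, b) ∈ G.edgeSet := hadj
  have hw₀ : 0 < w₀ := by
    have := hw _ hedge
    rwa [hsame a ha b hb hab] at this
  -- the bad cliques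
  set bad : Finset (Finset V) :=
    C.filter (fun E => ∃ x ∈ D, ∃ y ∈ D, x ≠ y ∧ x ∈ E ∧ y ∈ E) with hbad
  have hbadne : bad.Nonempty := by
    have hsumab := hsum _ hedge
    have hne : (C.filter (fun E => edgeIn s(a, b) E)).Nonempty := by
      rcases Finset.eq_empty_or_nonempty (C.filter (fun E => edgeIn s(a, b) E)) with he | he
      · rw [he, Finset.sum_empty] at hsumab
        have := hw _ hedge
        linarith
      · exact he
    obtain ⟨E, hE⟩ := hne
    rw [Finset.mem_filter] at hE
    refine ⟨E, Finset.mem_filter.mpr ⟨hE.1, a, ha, b, hb, hab, ?_, ?_⟩⟩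
    · exact hE.2 a (by simp)
    · exact hE.2 b (by simp)
  refine ⟨insert D (C \ bad), fun E => if E = D then w₀ else wt E, ⟨?_, ?_, ?_, ?_⟩,
      Finset.mem_insert_self _ _, if_pos rfl, ?_⟩
  · -- card
    have h1 : (C \ bad).card = C.card - bad.card :=
      Finset.card_sdiff_of_subset (Finset.filter_subset _ _)
    have h2 : 1 ≤ bad.card := Finset.card_pos.mpr hbadne
    have h3 : bad.card ≤ C.card := Finset.card_le_card (Finset.filter_subset _ _)
    calc (insert D (C \ bad)).card ≤ (C \ bad).card + 1 := Finset.card_insert_le _ _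
      _ ≤ C.card := by omega
      _ ≤ k := hcard
  · intro E hE
    rcases Finset.mem_insert.mp hE with rfl | hE
    · exact hD
    · exact hclq E (Finset.mem_sdiff.mp hE).1
  · intro E hE
    by_cases hED : E = D
    · simpa [hED] using hw₀
    · simp only [if_neg hED]
      rcases Finset.mem_insert.mp hE with h' | h'
      · exact absurd h' hED
      · exact hpos E (Finset.mem_sdiff.mp h').1
  · -- sum condition
    intro e he
    induction e using Sym2.ind with
    | _ x y =>
    have hxy : G.Adj x y := he
    have hxyne : x ≠ y := hxy.ne
    by_cases hin : edgeIn s(x, y) D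
    · -- the only clique containing e is D
      have hfilt : (insert D (C \ bad)).filter (fun E => edgeIn s(x, y) E) = {D} := by
        ext E
        simp only [Finset.mem_filter, Finset.mem_insert, Finset.mem_sdiff,
          Finset.mem_singleton]
        constructor
        · rintro ⟨rfl | ⟨hEC, hEbad⟩, hEe⟩
          · rfl
          · exfalso
            apply hEbad
            rw [hbad, Finset.mem_filter]
            exact ⟨hEC, x, hin x (by simp), y, hin y (by simp), hxyne,
              hEe x (by simp), hEe y (by simp)⟩
        · rintro rfl
          exact ⟨Or.inl rfl, hin⟩
      rw [hfilt, Finset.sum_singleton, if_pos rfl,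
        hsame x (hin x (by simp)) y (hin y (by simp)) hxyne]
    · -- same cliques as before
      have hfilt : (insert D (C \ bad)).filter (fun E => edgeIn s(x, y) E)
          = C.filter (fun E => edgeIn s(x, y) E) := by
        ext E
        simp only [Finset.mem_filter, Finset.mem_insert, Finset.mem_sdiff]
        constructor
        · rintro ⟨rfl | ⟨hEC, _⟩, hEe⟩
          · exact absurd hEe hin
          · exact ⟨hEC, hEe⟩
        · rintro ⟨hEC, hEe⟩
          refine ⟨Or.inr ⟨hEC, fun hEbad => ?_⟩, hEe⟩
          rw [hbad, Finset.mem_filter] at hEbad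
          have hsub := hlocal E (hclq E hEC) hEbad.2
          exact hin (fun z hz => hsub (hEe z hz))
      rw [hfilt, ← hsum _ he]
      refine Finset.sum_congr rfl (fun E hE => ?_)
      simp only
      rw [if_neg]
      rintro rfl
      exact hin (Finset.mem_filter.mp hE).2
  · -- no other clique contains an edge of D
    intro E hE hED hex
    rcases Finset.mem_insert.mp hE with rfl | hE'
    · exact hED rfl
    · have := (Finset.mem_sdiff.mp hE').2
      exact this (Finset.mem_filter.mpr ⟨(Finset.mem_sdiff.mp hE').1, hex⟩)
end

section
/- Let G be a finite simple graph with positive rational edge weights, let k ≥ 1, and let D be a clique of G with at least one edge such that all edges within D have the same weight w and such that every clique of G containing an edge of D has all of its vertices in D. Then G admits an edge-weighted clique decomposition of size at most k if and only if the weighted graph obtained from G by deleting all edges of D admits an edge-weighted clique decomposition of size at most k − 1. -/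
open scoped Classical

/-- Let `G` be a finite simple graph with positive rational edge weights, let `k ≥ 1`, and
let `D` be a clique of `G` with at least one edge such that all edges within `D` have the
same weight `w₀` and such that every clique of `G` containing an edge of `D` has all of its
vertices in `D`. Then `G` admits an edge-weighted clique decomposition of size at most `k`
if and only if the weighted graph obtained from `G` by deleting all edges of `D` admits an
edge-weighted clique decomposition of size at most `k - 1`. -/
theorem stmt_14 {V : Type*} [Fintype V] [DecidableEq V] (G : SimpleGraph V)
    (w : Sym2 V → ℚ) (hw : ∀ e ∈ G.edgeSet, 0 < w e) (k : ℕ) (hk : 1 ≤ k)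
    (D : Finset V) (w₀ : ℚ) (hD : G.IsClique (D : Set V)) (hD2 : 2 ≤ D.card)
    (hsame : ∀ x ∈ D, ∀ y ∈ D, x ≠ y → w s(x, y) = w₀)
    (hlocal : ∀ E : Finset V, G.IsClique (E : Set V) →
      (∃ x ∈ D, ∃ y ∈ D, x ≠ y ∧ x ∈ E ∧ y ∈ E) → (E : Set V) ⊆ (D : Set V)) :
    (∃ (C : Finset (Finset V)) (wt : Finset V → ℚ), IsEWCD G w k C wt) ↔
      ∃ (C : Finset (Finset V)) (wt : Finset V → ℚ),
        IsEWCD (G.deleteEdges {e : Sym2 V | ∀ x ∈ e, x ∈ D}) w (k - 1) C wt := by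

  constructor
  · rintro ⟨C, wt, hcard, hclique, hpos, hsum⟩
    -- pick an edge of D
    obtain ⟨x, hx, y, hy, hxy⟩ := Finset.one_lt_card.mp hD2
    have hadj : G.Adj x y := hD hx hy hxy
    have he₀ : s(x, y) ∈ G.edgeSet := hadj
    -- a clique containing this edge exists
    have hpos₀ : 0 < ∑ E ∈ C.filter (fun E => edgeIn s(x, y) E), wt E := by
      rw [hsum _ he₀]; exact hw _ he₀
    have hne : (C.filter (fun E => edgeIn s(x, y) E)).Nonempty := by
      by_contra h
      rw [Finset.not_nonempty_iff_eq_empty] at h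
      rw [h, Finset.sum_empty] at hpos₀
      exact lt_irrefl _ hpos₀
    obtain ⟨E₀, hE₀⟩ := hne
    rw [Finset.mem_filter] at hE₀
    set P : Finset V → Prop := fun E => ∃ a ∈ D, ∃ b ∈ D, a ≠ b ∧ a ∈ E ∧ b ∈ E with hP
    set C' := C.filter (fun E => ¬ P E) with hC'
    refine ⟨C', wt, ?_, ?_, ?_, ?_⟩
    · have hss : C' ⊂ C := by
        refine Finset.ssubset_iff_of_subset (Finset.filter_subset _ _) |>.mpr ?_
        refine ⟨E₀, hE₀.1, ?_⟩
        simp only [hC', Finset.mem_filter, not_and, not_not]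
        intro _
        exact ⟨x, hx, y, hy, hxy, hE₀.2 x (by simp), hE₀.2 y (by simp)⟩
      have := Finset.card_lt_card hss
      omega
    · intro E hE
      rw [hC', Finset.mem_filter] at hE
      intro a ha b hb hab
      rw [SimpleGraph.deleteEdges_adj]
      refine ⟨hclique E hE.1 ha hb hab, ?_⟩
      intro hmem
      simp only [Set.mem_setOf_eq] at hmem
      exact hE.2 ⟨a, hmem a (by simp), b, hmem b (by simp), hab, ha, hb⟩
    · intro E hE
      exact hpos E (Finset.mem_filter.mp hE).1
    · intro e he
      rw [SimpleGraph.edgeSet_deleteEdges, Set.mem_diff] at he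
      have hfe : C'.filter (fun E => edgeIn e E) = C.filter (fun E => edgeIn e E) := by
        rw [hC', Finset.filter_filter]
        apply Finset.filter_congr
        intro E hE
        simp only [and_iff_right_iff_imp]
        intro hin hPE
        have hsub := hlocal E (hclique E hE) hPE
        apply he.2
        intro z hz
        exact hsub (hin z hz)
      rw [hfe]
      exact hsum e he.1
  · rintro ⟨C, wt, hcard, hclique, hpos, hsum⟩
    obtain ⟨x, hx, y, hy, hxy⟩ := Finset.one_lt_card.mp hD2
    have hadj : G.Adj x y := hD hx hy hxy
    have hw₀ : 0 < w₀ := by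
      rw [← hsame x hx y hy hxy]
      exact hw _ hadj
    have hDnot : D ∉ C := by
      intro hDC
      have := hclique D hDC hx hy hxy
      rw [SimpleGraph.deleteEdges_adj] at this
      exact this.2 (by intro z hz; rcases Sym2.mem_iff.mp hz with h | h <;> subst h <;> assumption)
    refine ⟨insert D C, fun E => if E = D then w₀ else wt E, ?_, ?_, ?_, ?_⟩
    · have := Finset.card_insert_le D C
      omega
    · intro E hE
      rcases Finset.mem_insert.mp hE with h | h
      · subst h; exact hD
      · exact (hclique E h).mono (SimpleGraph.deleteEdges_le _)
    · intro E hE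
      rcases Finset.mem_insert.mp hE with h | h
      · simp [h, hw₀]
      · have hne : E ≠ D := fun hh => hDnot (hh ▸ h)
        simp only [if_neg hne]
        exact hpos E h
    · intro e he
      induction e with
      | h a b =>
        have hab : a ≠ b := (G.mem_edgeSet.mp he).ne
        by_cases hS : (s(a, b) : Sym2 V) ∈ {e : Sym2 V | ∀ x ∈ e, x ∈ D}
        · have haD : a ∈ D := hS a (by simp)
          have hbD : b ∈ D := hS b (by simp)
          have hfilter : (insert D C).filter (fun E => edgeIn s(a, b) E) = {D} := by
            ext E
            simp only [Finset.mem_filter, Finset.mem_insert, Finset.mem_singleton]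
            constructor
            · rintro ⟨h | h, hin⟩
              · exact h
              · exfalso
                have := hclique E h (hin a (by simp)) (hin b (by simp)) hab
                rw [SimpleGraph.deleteEdges_adj] at this
                exact this.2 hS
            · rintro rfl
              refine ⟨Or.inl rfl, ?_⟩
              intro z hz
              rcases Sym2.mem_iff.mp hz with h | h <;> subst h <;> assumption
          rw [hfilter, Finset.sum_singleton, if_pos rfl, hsame a haD b hbD hab]
        · have he' : (s(a, b) : Sym2 V) ∈ (G.deleteEdges {e : Sym2 V | ∀ x ∈ e, x ∈ D}).edgeSet := by
            rw [SimpleGraph.edgeSet_deleteEdges]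
            exact ⟨he, hS⟩
          have hDni : ¬ edgeIn (s(a, b) : Sym2 V) D := hS
          have hfilter : (insert D C).filter (fun E => edgeIn s(a, b) E)
              = C.filter (fun E => edgeIn s(a, b) E) := by
            rw [Finset.filter_insert, if_neg hDni]
          rw [hfilter]
          rw [← hsum _ he']
          apply Finset.sum_congr rfl
          intro E hE
          have hne : E ≠ D := fun hh => hDnot (hh ▸ (Finset.mem_filter.mp hE).1)
          simp only [if_neg hne]
end
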